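/- arXiv:1811.01904 — 3 statements merged into one kernel-verified Lean document; each statement's English description precedes it below -/
import Mathlib

section
/- For every integer d ≥ 1, every finite (2d−1)-regular simple graph admits an antimagic orientation. -/
set_option linter.unusedSectionVars false

namespace AMO
variable {V : Type*} [DecidableEq V]

/-- A walk: start vertex, end vertex, interior vertices. Vertex list is `a :: l ++ [b]`. -/
abbrev Wk (V : Type*) := V × V × List V

def verts (w : Wk V) : List V := w.1 :: (w.2.2 ++ [w.2.1])

def arcs : List V → List (V × V)
  | x :: y :: t => (x, y) :: arcs (y :: t)
  | _ => []

def wArcs (w : Wk V) : List (V × V) := arcs (verts w)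
def wEdges (w : Wk V) : List (Sym2 V) := (wArcs w).map fun p => s(p.1, p.2)
def slots (w : Wk V) : List V := if w.1 = w.2.1 then [] else [w.1, w.2.1]

lemma arcs_append (xs ys : List V) (y : V) :
    arcs (xs ++ y :: ys) = arcs (xs ++ [y]) ++ arcs (y :: ys) := by
  induction xs with
  | nil => simp [arcs]
  | cons a t ih =>
    cases t with
    | nil => simp [arcs]
    | cons b t' => simpa [arcs] using ih

lemma arcs_length (l : List V) : (arcs l).length = l.length - 1 := by
  induction l with
  | nil => simp [arcs]
  | cons a t ih =>
    cases t with
    | nil => simp [arcs]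
    | cons b t' => simpa [arcs] using ih

lemma wArcs_length (a b : V) (l : List V) : (wArcs (a, b, l)).length = l.length + 1 := by
  simp [wArcs, verts, arcs_length]

lemma arcs_reverse (l : List V) : arcs l.reverse = ((arcs l).map Prod.swap).reverse := by
  induction l with
  | nil => simp [arcs]
  | cons x t ih =>
    cases t with
    | nil => simp [arcs]
    | cons y t' =>
      have h1 : (x :: y :: t').reverse = t'.reverse ++ y :: [x] := by simp
      rw [h1, arcs_append]
      have h2 : t'.reverse ++ [y] = (y :: t').reverse := by simp
      rw [h2, ih]
      simp [arcs]

def rev (w : Wk V) : Wk V := (w.2.1, w.1, w.2.2.reverse)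

lemma verts_rev (w : Wk V) : verts (rev w) = (verts w).reverse := by
  obtain ⟨a, b, l⟩ := w
  simp [verts, rev]

lemma wEdges_rev (w : Wk V) : (wEdges (rev w) : Multiset (Sym2 V)) = (wEdges w : Multiset (Sym2 V)) := by
  have : (wEdges (rev w)).Perm (wEdges w) := by
    unfold wEdges wArcs
    rw [verts_rev, arcs_reverse]
    have : ∀ p : V × V, s(p.swap.1, p.swap.2) = s(p.1, p.2) := by
      intro p; simp [Prod.swap, Sym2.eq_swap]
    calc (((arcs (verts w)).map Prod.swap).reverse.map fun p => s(p.1, p.2)).Perm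
          (((arcs (verts w)).map Prod.swap).map fun p => s(p.1, p.2)) :=
            (List.reverse_perm _).map _
      _ = (arcs (verts w)).map fun p => s(p.1, p.2) := by
            rw [List.map_map]; congr 1; funext p; exact this p
  exact Multiset.coe_eq_coe.mpr this

lemma slots_rev_count (w : Wk V) (v : V) : (slots (rev w)).count v = (slots w).count v := by
  obtain ⟨a, b, l⟩ := w
  by_cases h : a = b
  · simp [slots, rev, h]
  · have h' : b ≠ a := fun hh => h hh.symm
    simp [slots, rev, h, h', List.count_cons]
    omega

-- walk operation lemmas
lemma wEdges_single (x y : V) : wEdges (x, y, ([] : List V)) = [s(x, y)] := by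
  simp [wEdges, wArcs, verts, arcs]

lemma wEdges_extend (a b c : V) (l : List V) :
    wEdges (a, c, l ++ [b]) = wEdges (a, b, l) ++ [s(b, c)] := by
  unfold wEdges wArcs verts
  simp only
  have h : (a :: ((l ++ [b]) ++ [c])) = (a :: l) ++ b :: [c] := by simp
  rw [h, arcs_append]
  simp [arcs]

lemma wEdges_join (a x y c : V) (l l' : List V) :
    wEdges (a, c, l ++ x :: y :: l') = wEdges (a, x, l) ++ s(x, y) :: wEdges (y, c, l') := by
  unfold wEdges wArcs verts
  simp only
  have h : (a :: ((l ++ x :: y :: l') ++ [c])) = (a :: l) ++ x :: (y :: (l' ++ [c])) := by simp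
  rw [h, arcs_append]
  simp [arcs]

lemma wEdges_splice (a c : V) (t l : List V) :
    wEdges (a, c, t ++ c :: l) = wEdges (a, c, t) ++ wEdges (c, c, l) := by
  unfold wEdges wArcs verts
  simp only
  have h : (a :: ((t ++ c :: l) ++ [c])) = (a :: t) ++ c :: (l ++ [c]) := by simp
  rw [h, arcs_append]
  simp

-- counting machinery
def sc (v : V) (L : List (Wk V)) : ℕ := (L.flatMap slots).count v
def edgeMS (L : List (Wk V)) : Multiset (Sym2 V) := ↑(L.flatMap wEdges)
def nClosed (L : List (Wk V)) : ℕ := L.countP (fun w => decide (w.1 = w.2.1))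

lemma sc_cons (v : V) (w : Wk V) (L : List (Wk V)) :
    sc v (w :: L) = (slots w).count v + sc v L := by
  simp [sc, List.flatMap_cons]

lemma edgeMS_cons (w : Wk V) (L : List (Wk V)) :
    edgeMS (w :: L) = (↑(wEdges w) : Multiset (Sym2 V)) + edgeMS L := by
  simp [edgeMS, List.flatMap_cons]

lemma sc_perm {L L' : List (Wk V)} (h : L.Perm L') (v : V) : sc v L = sc v L' :=
  (h.flatMap_right slots).count_eq v

lemma edgeMS_perm {L L' : List (Wk V)} (h : L.Perm L') : edgeMS L = edgeMS L' :=
  Multiset.coe_eq_coe.mpr (h.flatMap_right wEdges)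

lemma nClosed_perm {L L' : List (Wk V)} (h : L.Perm L') : nClosed L = nClosed L' :=
  h.countP_eq _

lemma extract (y : V) (L : List (Wk V)) (h : y ∈ L.flatMap slots) :
    ∃ a l L₂, a ≠ y ∧
      edgeMS L = (↑(wEdges (a, y, l)) : Multiset (Sym2 V)) + edgeMS L₂ ∧
      (∀ v, sc v L = List.count v [a, y] + sc v L₂) ∧
      nClosed L = nClosed L₂ := by
  obtain ⟨w, hw, hys⟩ := List.mem_flatMap.mp h
  by_cases hcl : w.1 = w.2.1
  · simp [slots, hcl] at hys
  obtain ⟨s, t, rfl⟩ := List.append_of_mem hw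
  have hperm : (s ++ w :: t).Perm (w :: (s ++ t)) := List.perm_middle
  have hsl : slots w = [w.1, w.2.1] := by simp [slots, hcl]
  rw [hsl] at hys
  rcases List.mem_pair.mp hys with hy | hy
  · -- y = w.1 : use reversed walk
    refine ⟨w.2.1, w.2.2.reverse, s ++ t, fun hh => hcl (hy ▸ hh.symm), ?_, ?_, ?_⟩
    · have hrev : (↑(wEdges ((w.2.1, y, w.2.2.reverse) : Wk V)) : Multiset (Sym2 V))
          = ↑(wEdges w) := by subst hy; exact wEdges_rev w
      rw [edgeMS_perm hperm, edgeMS_cons, hrev]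
    · intro v
      rw [sc_perm hperm v, sc_cons, hsl]
      congr 1
      subst hy
      simp [List.count_cons]
      omega
    · rw [nClosed_perm hperm]
      simp [nClosed, hcl]
  · -- y = w.2.1
    refine ⟨w.1, w.2.2, s ++ t, fun hh => hcl (hy ▸ hh), ?_, ?_, ?_⟩
    · rw [edgeMS_perm hperm, edgeMS_cons]
      subst hy
      rfl
    · intro v
      rw [sc_perm hperm v, sc_cons, hsl, hy]
    · rw [nClosed_perm hperm]
      simp [nClosed, hcl]

-- degree in an edge finset
def dF (F : Finset (Sym2 V)) (v : V) : ℕ := (F.filter (fun e => v ∈ e)).card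

lemma dF_erase (F : Finset (Sym2 V)) (e : Sym2 V) (he : e ∈ F) (v : V) :
    dF F v = (if v ∈ e then 1 else 0) + dF (F.erase e) v := by
  unfold dF
  conv_lhs => rw [show F = insert e (F.erase e) from (Finset.insert_erase he).symm]
  rw [Finset.filter_insert]
  by_cases hv : v ∈ e
  · rw [if_pos hv, if_pos hv,
      Finset.card_insert_of_notMem (fun hm => (Finset.notMem_erase e F) (Finset.mem_of_mem_filter e hm))]
    omega
  · rw [if_neg hv, if_neg hv]
    omega

lemma count_pair (v a b : V) :
    List.count v [a, b] = (if a = v then 1 else 0) + (if b = v then 1 else 0) := by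
  by_cases h1 : a = v <;> by_cases h2 : b = v <;>
    simp [List.count_cons, h1, h2, List.count_singleton]

lemma ms_snoc (e : Sym2 V) (l : List (Sym2 V)) (M : Multiset (Sym2 V)) :
    (↑(l ++ [e]) : Multiset (Sym2 V)) + M = e ::ₘ ((↑l : Multiset (Sym2 V)) + M) := by
  rw [← Multiset.coe_add, Multiset.coe_singleton, ← Multiset.singleton_add]
  abel

lemma ms_join (e : Sym2 V) (l l2 lr : List (Sym2 V)) (M : Multiset (Sym2 V))
    (h : (↑lr : Multiset (Sym2 V)) = ↑l) :
    (↑(l2 ++ e :: lr) : Multiset (Sym2 V)) + M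
      = e ::ₘ ((↑l : Multiset (Sym2 V)) + ((↑l2 : Multiset (Sym2 V)) + M)) := by
  rw [show (e :: lr : List (Sym2 V)) = [e] ++ lr from rfl, ← Multiset.coe_add, ← Multiset.coe_add,
    Multiset.coe_singleton, ← Multiset.singleton_add, ← h]
  abel

lemma stepB (x y : V) (hxy : x ≠ y) (L' : List (Wk V))
    (hsx : sc x L' = 0) (hsy : sc y L' = 1) :
    ∃ L : List (Wk V), edgeMS L = s(x, y) ::ₘ edgeMS L' ∧
      sc x L = 1 ∧ sc y L = 0 ∧ ∀ v, v ≠ x → v ≠ y → sc v L = sc v L' := by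
  have hmem : y ∈ L'.flatMap slots := by
    rw [← List.count_pos_iff]
    unfold sc at hsy
    omega
  obtain ⟨a, l, L₂, ha, hE, hC, -⟩ := extract y L' hmem
  have hcx := hC x
  rw [count_pair, hsx] at hcx
  have hax : a ≠ x := by
    intro hh
    rw [if_pos hh] at hcx
    omega
  have hx2 : sc x L₂ = 0 := by omega
  have hcy := hC y
  rw [count_pair, hsy, if_neg ha, if_pos rfl] at hcy
  have hay : sc y L₂ = 0 := by omega
  have hsl : slots ((a, x, l ++ [y]) : Wk V) = [a, x] := by simp [slots, hax]
  refine ⟨(a, x, l ++ [y]) :: L₂, ?_, ?_, ?_, ?_⟩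
  · rw [edgeMS_cons, wEdges_extend a y x l, hE, ms_snoc, Sym2.eq_swap]
  · rw [sc_cons, hsl, count_pair, if_neg hax, if_pos rfl, hx2]
  · rw [sc_cons, hsl, count_pair, if_neg ha, if_neg hxy, hay]
  · intro v hvx hvy
    rw [sc_cons, hsl, count_pair, hC v, count_pair,
      if_neg (Ne.symm hvx), if_neg (Ne.symm hvy)]

lemma stepC (x y : V) (hxy : x ≠ y) (L' : List (Wk V))
    (hsx : sc x L' = 1) (hsy : sc y L' = 1) (hbd : ∀ v, sc v L' ≤ 1) :
    ∃ L : List (Wk V), edgeMS L = s(x, y) ::ₘ edgeMS L' ∧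
      sc x L = 0 ∧ sc y L = 0 ∧ ∀ v, v ≠ x → v ≠ y → sc v L = sc v L' := by
  have hmem : x ∈ L'.flatMap slots := by
    rw [← List.count_pos_iff]; unfold sc at hsx; omega
  obtain ⟨a, l, L₂, ha, hE, hC, -⟩ := extract x L' hmem
  have hcx := hC x
  rw [count_pair, hsx, if_neg ha, if_pos rfl] at hcx
  have hx2 : sc x L₂ = 0 := by omega
  by_cases hya : y = a
  · -- close up into a closed walk
    subst hya
    have hcy := hC y
    rw [count_pair, hsy, if_pos rfl, if_neg hxy] at hcy
    have hy2 : sc y L₂ = 0 := by omega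
    have hsl : slots ((y, y, l ++ [x]) : Wk V) = [] := by simp [slots]
    refine ⟨(y, y, l ++ [x]) :: L₂, ?_, ?_, ?_, ?_⟩
    · rw [edgeMS_cons, wEdges_extend y x y l, hE, ms_snoc, Sym2.eq_swap]
    · rw [sc_cons, hsl, hx2]
      rfl
    · rw [sc_cons, hsl, hy2]
      rfl
    · intro v hvx hvy
      rw [sc_cons, hsl, hC v, count_pair,
        if_neg (Ne.symm hvy), if_neg (Ne.symm hvx)]
      rfl
  · -- join two distinct walks
    have hcy := hC y
    rw [count_pair, hsy, if_neg (fun h : a = y => hya h.symm), if_neg hxy] at hcy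
    have hy2 : sc y L₂ = 1 := by omega
    have hmem2 : y ∈ L₂.flatMap slots := by
      rw [← List.count_pos_iff]; unfold sc at hy2; omega
    obtain ⟨a₂, l₂, L₃, ha₂, hE₂, hC₂, -⟩ := extract y L₂ hmem2
    have hcy2 := hC₂ y
    rw [count_pair, hy2, if_neg ha₂, if_pos rfl] at hcy2
    have hy3 : sc y L₃ = 0 := by omega
    have hcx2 := hC₂ x
    rw [count_pair, hx2] at hcx2
    have hax2 : a₂ ≠ x := by
      intro hh
      rw [if_pos hh] at hcx2
      omega
    have hx3 : sc x L₃ = 0 := by omega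
    have haa : a ≠ a₂ := by
      intro hh
      have h1 := hC a
      have h2 := hC₂ a
      rw [count_pair, if_pos rfl] at h1
      rw [count_pair, if_pos hh.symm] at h2
      have := hbd a
      omega
    have hsl : slots ((a₂, a, l₂ ++ y :: x :: l.reverse) : Wk V) = [a₂, a] := by
      simp [slots, Ne.symm haa]
    refine ⟨(a₂, a, l₂ ++ y :: x :: l.reverse) :: L₃, ?_, ?_, ?_, ?_⟩
    · rw [edgeMS_cons, wEdges_join a₂ y x a l₂ l.reverse,
        ms_join (s(y,x)) (wEdges ((a, x, l) : Wk V)) _ _ _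
          (show (↑(wEdges ((x, a, l.reverse) : Wk V)) : Multiset (Sym2 V))
            = ↑(wEdges ((a, x, l) : Wk V)) from wEdges_rev ((a, x, l) : Wk V)),
        hE, hE₂, Sym2.eq_swap]
    · rw [sc_cons, hsl, count_pair, if_neg hax2, if_neg ha, hx3]
    · rw [sc_cons, hsl, count_pair, if_neg ha₂,
        if_neg (fun h : a = y => hya h.symm), hy3]
    · intro v hvx hvy
      rw [sc_cons, hsl, count_pair, hC v, hC₂ v, count_pair, count_pair,
        if_neg (Ne.symm hvx), if_neg (Ne.symm hvy)]
      omega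

lemma lemD : ∀ (F : Finset (Sym2 V)), (∀ e ∈ F, ¬ e.IsDiag) →
    ∃ L : List (Wk V), edgeMS L = F.val ∧
      ∀ v, sc v L = if Odd (dF F v) then 1 else 0 := by
  intro F
  induction F using Finset.strongInduction with
  | _ F ih =>
    intro hF
    rcases F.eq_empty_or_nonempty with rfl | ⟨e, he⟩
    · exact ⟨[], by simp [edgeMS], fun v => by simp [sc, dF]⟩
    obtain ⟨⟨x, y⟩, rfl⟩ := e.exists_rep
    have hexy : Quot.mk (Sym2.Rel V) (x, y) = s(x, y) := rfl
    rw [hexy] at he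
    have hxy : x ≠ y := by
      intro hh
      exact hF (s(x,y)) he (by rw [Sym2.mk_isDiag_iff]; exact hh)
    set F' := F.erase (s(x, y)) with hF'def
    have hss : F' ⊂ F := Finset.erase_ssubset he
    have hF' : ∀ e' ∈ F', ¬ e'.IsDiag := fun e' he' => hF e' (Finset.erase_subset _ _ he')
    obtain ⟨L', hE', hS'⟩ := ih F' hss hF'
    have hbd : ∀ v, sc v L' ≤ 1 := fun v => by rw [hS' v]; split <;> omega
    have hval : s(x, y) ::ₘ F'.val = F.val := by
      rw [hF'def, Finset.erase_val]
      exact Multiset.cons_erase he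
    have hdx : dF F x = dF F' x + 1 := by
      rw [dF_erase F (s(x,y)) he x, if_pos (Sym2.mem_mk_left x y), ← hF'def]
      omega
    have hdy : dF F y = dF F' y + 1 := by
      rw [dF_erase F (s(x,y)) he y, if_pos (Sym2.mem_mk_right x y), ← hF'def]
      omega
    have hdo : ∀ v, v ≠ x → v ≠ y → dF F v = dF F' v := by
      intro v hvx hvy
      rw [dF_erase F (s(x,y)) he v, if_neg]
      · rw [← hF'def]
        omega
      · rw [Sym2.mem_iff]
        rintro (h | h) <;> [exact hvx h; exact hvy h]
    have hpx : Odd (dF F x) ↔ ¬ Odd (dF F' x) := by rw [hdx]; exact Nat.odd_add_one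
    have hpy : Odd (dF F y) ↔ ¬ Odd (dF F' y) := by rw [hdy]; exact Nat.odd_add_one
    by_cases hox : Odd (dF F x) <;> by_cases hoy : Odd (dF F y)
    · -- both odd in F: add a new single-edge walk
      have hsx : sc x L' = 0 := by rw [hS' x, if_neg (fun h => (hpx.mp hox) h)]
      have hsy : sc y L' = 0 := by rw [hS' y, if_neg (fun h => (hpy.mp hoy) h)]
      have hsl : slots ((x, y, ([] : List V)) : Wk V) = [x, y] := by simp [slots, hxy]
      refine ⟨(x, y, []) :: L', ?_, ?_⟩
      · rw [edgeMS_cons, wEdges_single, Multiset.coe_singleton,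
          Multiset.singleton_add, hE', hval]
      · intro v
        rw [sc_cons, hsl, count_pair, hS' v]
        by_cases hvx : v = x
        · subst hvx
          rw [if_pos rfl, if_neg (Ne.symm hxy), if_pos hox,
            if_neg (fun h => (hpx.mp hox) h)]
        by_cases hvy : v = y
        · subst hvy
          rw [if_pos rfl, if_neg hxy, if_pos hoy, if_neg (fun h => (hpy.mp hoy) h)]
        · rw [if_neg (fun h : x = v => hvx h.symm), if_neg (fun h : y = v => hvy h.symm),
            hdo v hvx hvy]
          omega
    · -- x odd, y even in F
      have hsx : sc x L' = 0 := by rw [hS' x, if_neg (fun h => (hpx.mp hox) h)]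
      have hsy : sc y L' = 1 := by
        rw [hS' y, if_pos]
        by_contra h
        exact hoy (hpy.mpr h)
      obtain ⟨L, hLE, hLx, hLy, hLo⟩ := stepB x y hxy L' hsx hsy
      refine ⟨L, by rw [hLE, hE', hval], ?_⟩
      intro v
      by_cases hvx : v = x
      · subst hvx; rw [hLx, if_pos hox]
      by_cases hvy : v = y
      · subst hvy; rw [hLy, if_neg hoy]
      · rw [hLo v hvx hvy, hS' v, hdo v hvx hvy]
    · -- x even, y odd in F
      have hsy : sc y L' = 0 := by rw [hS' y, if_neg (fun h => (hpy.mp hoy) h)]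
      have hsx : sc x L' = 1 := by
        rw [hS' x, if_pos]
        by_contra h
        exact hox (hpx.mpr h)
      obtain ⟨L, hLE, hLy, hLx, hLo⟩ := stepB y x (Ne.symm hxy) L' hsy hsx
      refine ⟨L, by rw [hLE, hE', Sym2.eq_swap, hval], ?_⟩
      intro v
      by_cases hvx : v = x
      · subst hvx; rw [hLx, if_neg hox]
      by_cases hvy : v = y
      · subst hvy; rw [hLy, if_pos hoy]
      · rw [hLo v hvy hvx, hS' v, hdo v hvx hvy]
    · -- both even in F
      have hsx : sc x L' = 1 := by
        rw [hS' x, if_pos]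
        by_contra h
        exact hox (hpx.mpr h)
      have hsy : sc y L' = 1 := by
        rw [hS' y, if_pos]
        by_contra h
        exact hoy (hpy.mpr h)
      obtain ⟨L, hLE, hLx, hLy, hLo⟩ := stepC x y hxy L' hsx hsy hbd
      refine ⟨L, by rw [hLE, hE', hval], ?_⟩
      intro v
      by_cases hvx : v = x
      · subst hvx; rw [hLx, if_neg hox]
      by_cases hvy : v = y
      · subst hvy; rw [hLy, if_neg hoy]
      · rw [hLo v hvx hvy, hS' v, hdo v hvx hvy]

lemma elimAux : ∀ (k : ℕ) (L : List (Wk V)), nClosed L ≤ k → (∀ v, sc v L = 1) →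
    ∃ L' : List (Wk V), edgeMS L' = edgeMS L ∧ (∀ v, sc v L' = 1) ∧
      ∀ w ∈ L', w.1 ≠ w.2.1 := by
  intro k
  induction k with
  | zero =>
    intro L hk hall
    refine ⟨L, rfl, hall, ?_⟩
    intro w hw hcl
    have : 0 < nClosed L := by
      rw [nClosed, List.countP_pos_iff]
      exact ⟨w, hw, by simpa using hcl⟩
    omega
  | succ k ih =>
    intro L hk hall
    by_cases h0 : nClosed L = 0
    · refine ⟨L, rfl, hall, ?_⟩
      intro w hw hcl
      have : 0 < nClosed L := by
        rw [nClosed, List.countP_pos_iff]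
        exact ⟨w, hw, by simpa using hcl⟩
      omega
    · have hpos : 0 < nClosed L := Nat.pos_of_ne_zero h0
      rw [nClosed, List.countP_pos_iff] at hpos
      obtain ⟨C, hCL, hCcl⟩ := hpos
      have hC : C.1 = C.2.1 := by simpa using hCcl
      obtain ⟨s, t, rfl⟩ := List.append_of_mem hCL
      have hperm : (s ++ C :: t).Perm (C :: (s ++ t)) := List.perm_middle
      set c := C.1 with hcdef
      have hslC : slots C = [] := by simp [slots, ← hC]; exact hcdef.symm
      have hsc1 : sc c (s ++ t) = 1 := by
        have := hall c
        rw [sc_perm hperm c, sc_cons, hslC] at this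
        simpa using this
      have hmem : c ∈ (s ++ t).flatMap slots := by
        rw [← List.count_pos_iff]
        unfold sc at hsc1
        omega
      obtain ⟨a, t', L₂, ha, hE2, hC2, hNc⟩ := extract c (s ++ t) hmem
      have hCw : C = ((c, c, C.2.2) : Wk V) := by
        rw [hcdef]
        exact Prod.ext rfl (Prod.ext hC.symm rfl)
      set W : Wk V := (a, c, t' ++ c :: C.2.2) with hWdef
      have hWopen : W.1 ≠ W.2.1 := ha
      have hWedges : wEdges W = wEdges ((a, c, t') : Wk V) ++ wEdges ((c, c, C.2.2) : Wk V) :=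
        wEdges_splice a c t' C.2.2
      have hEnew : edgeMS (W :: L₂) = edgeMS (s ++ C :: t) := by
        rw [edgeMS_cons, hWedges, edgeMS_perm hperm, edgeMS_cons, hE2, ← hCw,
          ← Multiset.coe_add]
        abel
      have hscnew : ∀ v, sc v (W :: L₂) = 1 := by
        intro v
        have hv := hall v
        rw [sc_perm hperm v, sc_cons, hslC, hC2 v] at hv
        rw [sc_cons, show slots W = [a, c] by simp [hWdef, slots, ha]]
        simpa using hv
      have hncnew : nClosed (W :: L₂) ≤ k := by
        have h1 : nClosed (s ++ C :: t) = nClosed (C :: (s ++ t)) := nClosed_perm hperm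
        have h2 : nClosed (C :: (s ++ t)) = 1 + nClosed (s ++ t) := by
          unfold nClosed
          rw [List.countP_cons, if_pos (by simpa using hC)]
          omega
        have h3 : nClosed (W :: L₂) = nClosed L₂ := by
          unfold nClosed
          rw [List.countP_cons, if_neg (by simpa using hWopen)]
          omega
        omega
      obtain ⟨L', hE', hS', hO'⟩ := ih (W :: L₂) hncnew hscnew
      exact ⟨L', by rw [hE', hEnew], hS', hO'⟩

-- position-weighted sums
def val (u : V) : ℤ → List (V × V) → ℤ
  | _, [] => 0
  | o, p :: t => ((if p.2 = u then o + 1 else 0) - (if p.1 = u then o + 1 else 0)) + val u (o + 1) t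

def ss (u : V) : ℤ → List (Wk V) → ℤ
  | _, [] => 0
  | o, w :: t => ((if w.2.1 = u then o + (w.2.2.length : ℤ) + 1 else 0)
      - (if w.1 = u then o + 1 else 0)) + ss u (o + (w.2.2.length : ℤ) + 1) t

def intCount (u : V) (L : List (Wk V)) : ℕ := (L.map (fun w => w.2.2.count u)).sum

lemma count_cons'' (u c : V) (l : List V) :
    (c :: l).count u = l.count u + (if c = u then 1 else 0) := by
  rcases eq_or_ne c u with h | h
  · subst h; simp [List.count_cons]
  · simp [List.count_cons, h, Ne.symm h]

lemma val_append (u : V) : ∀ (A B : List (V × V)) (o : ℤ),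
    val u o (A ++ B) = val u o A + val u (o + A.length) B := by
  intro A
  induction A with
  | nil => intro B o; simp [val]
  | cons p t ih =>
    intro B o
    rw [List.cons_append]
    show _ + val u (o+1) (t ++ B) = _ + val u (o+1) t + _
    rw [ih B (o+1), List.length_cons]
    push_cast
    rw [show o + 1 + (t.length : ℤ) = o + ((t.length : ℤ) + 1) by ring]
    ring

lemma val_chunk (u : V) : ∀ (l : List V) (a b : V) (o : ℤ),
    val u o (wArcs (a, b, l)) = -(l.count u : ℤ)
      + ((if b = u then o + (l.length : ℤ) + 1 else 0) - (if a = u then o + 1 else 0)) := by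
  intro l
  induction l with
  | nil =>
    intro a b o
    show val u o [(a, b)] = _
    show ((if b = u then o + 1 else 0) - (if a = u then o + 1 else 0)) + val u (o+1) [] = _
    simp [val]
  | cons c l' ih =>
    intro a b o
    have harc : wArcs ((a, b, c :: l') : Wk V) = (a, c) :: wArcs ((c, b, l') : Wk V) := by
      simp [wArcs, verts, arcs]
    rw [harc]
    show ((if c = u then o + 1 else 0) - (if a = u then o + 1 else 0))
        + val u (o+1) (wArcs ((c, b, l') : Wk V)) = _
    rw [ih c b (o+1), count_cons'' u c l', List.length_cons]
    push_cast
    split_ifs <;> ring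

lemma val_flat (u : V) : ∀ (L : List (Wk V)) (o : ℤ),
    val u o (L.flatMap wArcs) = -(intCount u L : ℤ) + ss u o L := by
  intro L
  induction L with
  | nil => intro o; simp [val, ss, intCount]
  | cons w t ih =>
    intro o
    obtain ⟨a, b, l⟩ := w
    rw [List.flatMap_cons, val_append, val_chunk, wArcs_length, ih]
    show _ = -(intCount u ((a,b,l) :: t) : ℤ) +
      (((if b = u then o + (l.length : ℤ) + 1 else 0) - (if a = u then o + 1 else 0))
        + ss u (o + (l.length : ℤ) + 1) t)
    have hic : intCount u (((a,b,l) : Wk V) :: t) = l.count u + intCount u t := by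
      simp [intCount]
    rw [hic]
    push_cast
    ring

lemma sc_head_cases (u : V) (w : Wk V) (L : List (Wk V)) (hop : w.1 ≠ w.2.1)
    (h : sc u (w :: L) = 1) :
    (w.2.1 = u ∧ w.1 ≠ u ∧ sc u L = 0) ∨ (w.1 = u ∧ w.2.1 ≠ u ∧ sc u L = 0)
      ∨ (w.1 ≠ u ∧ w.2.1 ≠ u ∧ sc u L = 1) := by
  rw [sc_cons, show slots w = [w.1, w.2.1] by simp [slots, hop], count_pair] at h
  by_cases h1 : w.1 = u <;> by_cases h2 : w.2.1 = u
  · rw [if_pos h1, if_pos h2] at h; omega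
  · rw [if_pos h1, if_neg h2] at h; exact Or.inr (Or.inl ⟨h1, h2, by omega⟩)
  · rw [if_neg h1, if_pos h2] at h; exact Or.inl ⟨h2, h1, by omega⟩
  · rw [if_neg h1, if_neg h2] at h; exact Or.inr (Or.inr ⟨h1, h2, by omega⟩)

lemma ss_cons (u : V) (w : Wk V) (L : List (Wk V)) (o : ℤ) :
    ss u o (w :: L) = ((if w.2.1 = u then o + (w.2.2.length : ℤ) + 1 else 0)
      - (if w.1 = u then o + 1 else 0)) + ss u (o + (w.2.2.length : ℤ) + 1) L := rfl

lemma ss_of_sc_zero (u : V) : ∀ (L : List (Wk V)) (o : ℤ),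
    (∀ w ∈ L, w.1 ≠ w.2.1) → sc u L = 0 → ss u o L = 0 := by
  intro L
  induction L with
  | nil => intro o _ _; rfl
  | cons w t ih =>
    intro o hop h
    rw [sc_cons, show slots w = [w.1, w.2.1] by simp [slots, hop w List.mem_cons_self],
      count_pair] at h
    have h1 : w.1 ≠ u := by intro hh; rw [if_pos hh] at h; omega
    have h2 : w.2.1 ≠ u := by intro hh; rw [if_pos hh] at h; omega
    have h3 : sc u t = 0 := by omega
    rw [ss_cons, if_neg h2, if_neg h1, ih _ (fun w' hw' => hop w' (List.mem_cons_of_mem _ hw')) h3]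
    ring

lemma ss_bound (u : V) : ∀ (L : List (Wk V)) (o : ℤ),
    (∀ w ∈ L, w.1 ≠ w.2.1) → sc u L = 1 → 0 ≤ o →
    (o + 1 ≤ ss u o L ∨ ss u o L ≤ -(o + 1)) := by
  intro L
  induction L with
  | nil => intro o _ h _; simp [sc] at h
  | cons w t ih =>
    intro o hop h ho
    have hopw := hop w List.mem_cons_self
    have hopt := fun w' hw' => hop w' (List.mem_cons_of_mem w hw')
    have hlen : (0 : ℤ) ≤ (w.2.2.length : ℤ) := Int.natCast_nonneg _
    rcases sc_head_cases u w t hopw h with ⟨h1, h2, h3⟩ | ⟨h1, h2, h3⟩ | ⟨h1, h2, h3⟩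
    · left
      rw [ss_cons, if_pos h1, if_neg h2, ss_of_sc_zero u t _ hopt h3]
      omega
    · right
      rw [ss_cons, if_neg h2, if_pos h1, ss_of_sc_zero u t _ hopt h3]
      omega
    · rw [ss_cons, if_neg h2, if_neg h1]
      rcases ih (o + (w.2.2.length : ℤ) + 1) hopt h3 (by omega) with hb | hb
      · left; omega
      · right; omega

lemma ss_inj (u v : V) (huv : u ≠ v) : ∀ (L : List (Wk V)) (o : ℤ),
    (∀ w ∈ L, w.1 ≠ w.2.1) → sc u L = 1 → sc v L = 1 → 0 ≤ o →
    ss u o L ≠ ss v o L := by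
  intro L
  induction L with
  | nil => intro o _ h _ _; simp [sc] at h
  | cons w t ih =>
    intro o hop hu hv ho
    have hopw := hop w List.mem_cons_self
    have hopt := fun w' hw' => hop w' (List.mem_cons_of_mem w hw')
    have hlen : (0 : ℤ) ≤ (w.2.2.length : ℤ) := Int.natCast_nonneg _
    have ho' : (0 : ℤ) ≤ o + (w.2.2.length : ℤ) + 1 := by omega
    rcases sc_head_cases u w t hopw hu with ⟨hu1, hu2, hu3⟩ | ⟨hu1, hu2, hu3⟩ | ⟨hu1, hu2, hu3⟩ <;>
      rcases sc_head_cases v w t hopw hv with ⟨hv1, hv2, hv3⟩ | ⟨hv1, hv2, hv3⟩ | ⟨hv1, hv2, hv3⟩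
    · exact absurd (hu1.symm.trans hv1) huv
    · have pu : ss u o (w :: t) = o + (w.2.2.length : ℤ) + 1 := by
        rw [ss_cons, if_pos hu1, if_neg hu2, ss_of_sc_zero u t _ hopt hu3]; ring
      have pv : ss v o (w :: t) = -(o + 1) := by
        rw [ss_cons, if_neg hv2, if_pos hv1, ss_of_sc_zero v t _ hopt hv3]; ring
      rw [pu, pv]; omega
    · have pu : ss u o (w :: t) = o + (w.2.2.length : ℤ) + 1 := by
        rw [ss_cons, if_pos hu1, if_neg hu2, ss_of_sc_zero u t _ hopt hu3]; ring
      have pv : ss v o (w :: t) = ss v (o + (w.2.2.length : ℤ) + 1) t := by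
        rw [ss_cons, if_neg hv2, if_neg hv1]; ring
      rcases ss_bound v t (o + (w.2.2.length : ℤ) + 1) hopt hv3 ho' with hb | hb <;>
        rw [pu, pv] <;> omega
    · have pu : ss u o (w :: t) = -(o + 1) := by
        rw [ss_cons, if_neg hu2, if_pos hu1, ss_of_sc_zero u t _ hopt hu3]; ring
      have pv : ss v o (w :: t) = o + (w.2.2.length : ℤ) + 1 := by
        rw [ss_cons, if_pos hv1, if_neg hv2, ss_of_sc_zero v t _ hopt hv3]; ring
      rw [pu, pv]; omega
    · exact absurd (hu1.symm.trans hv1) huv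
    · have pu : ss u o (w :: t) = -(o + 1) := by
        rw [ss_cons, if_neg hu2, if_pos hu1, ss_of_sc_zero u t _ hopt hu3]; ring
      have pv : ss v o (w :: t) = ss v (o + (w.2.2.length : ℤ) + 1) t := by
        rw [ss_cons, if_neg hv2, if_neg hv1]; ring
      rcases ss_bound v t (o + (w.2.2.length : ℤ) + 1) hopt hv3 ho' with hb | hb <;>
        rw [pu, pv] <;> omega
    · have pv : ss v o (w :: t) = o + (w.2.2.length : ℤ) + 1 := by
        rw [ss_cons, if_pos hv1, if_neg hv2, ss_of_sc_zero v t _ hopt hv3]; ring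
      have pu : ss u o (w :: t) = ss u (o + (w.2.2.length : ℤ) + 1) t := by
        rw [ss_cons, if_neg hu2, if_neg hu1]; ring
      rcases ss_bound u t (o + (w.2.2.length : ℤ) + 1) hopt hu3 ho' with hb | hb <;>
        rw [pu, pv] <;> omega
    · have pv : ss v o (w :: t) = -(o + 1) := by
        rw [ss_cons, if_neg hv2, if_pos hv1, ss_of_sc_zero v t _ hopt hv3]; ring
      have pu : ss u o (w :: t) = ss u (o + (w.2.2.length : ℤ) + 1) t := by
        rw [ss_cons, if_neg hu2, if_neg hu1]; ring
      rcases ss_bound u t (o + (w.2.2.length : ℤ) + 1) hopt hu3 ho' with hb | hb <;>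
        rw [pu, pv] <;> omega
    · have pu : ss u o (w :: t) = ss u (o + (w.2.2.length : ℤ) + 1) t := by
        rw [ss_cons, if_neg hu2, if_neg hu1]; ring
      have pv : ss v o (w :: t) = ss v (o + (w.2.2.length : ℤ) + 1) t := by
        rw [ss_cons, if_neg hv2, if_neg hv1]; ring
      rw [pu, pv]
      exact ih (o + (w.2.2.length : ℤ) + 1) hopt hu3 hv3 ho'

lemma sum_fin_val (u : V) : ∀ (A : List (V × V)) (o : ℤ),
    (∑ i : Fin A.length, ((if (A.get i).2 = u then o + ((i : ℕ) : ℤ) + 1 else 0)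
      - (if (A.get i).1 = u then o + ((i : ℕ) : ℤ) + 1 else 0))) = val u o A := by
  intro A
  induction A with
  | nil => intro o; simp [val]
  | cons p t ih =>
    intro o
    simp only [List.length_cons]
    rw [Fin.sum_univ_succ]
    have hbody : ∀ i : Fin t.length,
        ((if ((p :: t).get i.succ).2 = u then o + ((i.succ : ℕ) : ℤ) + 1 else 0)
          - (if ((p :: t).get i.succ).1 = u then o + ((i.succ : ℕ) : ℤ) + 1 else 0))
        = ((if (t.get i).2 = u then (o + 1) + ((i : ℕ) : ℤ) + 1 else 0)
          - (if (t.get i).1 = u then (o + 1) + ((i : ℕ) : ℤ) + 1 else 0)) := by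
      intro i
      have hg : ((p :: t).get i.succ) = t.get i := rfl
      have hc : ((i.succ : ℕ) : ℤ) = ((i : ℕ) : ℤ) + 1 := by
        rw [Fin.val_succ]
        push_cast
        ring
      rw [hg, hc]
      split_ifs <;> ring
    rw [Finset.sum_congr rfl (fun i _ => hbody i), ih (o + 1)]
    show _ + _ = ((if p.2 = u then o + 1 else 0) - (if p.1 = u then o + 1 else 0)) + val u (o+1) t
    have hg0 : ((p :: t).get (0 : Fin (t.length + 1))) = p := rfl
    have hc0 : (((0 : Fin (t.length + 1)) : ℕ) : ℤ) = 0 := rfl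
    rw [hg0, hc0]
    split_ifs <;> ring

def epCount (u : V) (A : List (V × V)) : ℕ :=
  (A.map (fun p => (if p.1 = u then 1 else 0) + (if p.2 = u then 1 else 0))).sum

lemma epCount_append (u : V) (A B : List (V × V)) :
    epCount u (A ++ B) = epCount u A + epCount u B := by
  simp [epCount]

lemma ep_chunk (u : V) : ∀ (l : List V) (a b : V),
    epCount u (wArcs (a, b, l)) = 2 * l.count u
      + ((if a = u then 1 else 0) + (if b = u then 1 else 0)) := by
  intro l
  induction l with
  | nil =>
    intro a b
    have : wArcs ((a, b, ([] : List V)) : Wk V) = [(a, b)] := by simp [wArcs, verts, arcs]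
    rw [this]
    simp [epCount]
  | cons c l' ih =>
    intro a b
    have harc : wArcs ((a, b, c :: l') : Wk V) = (a, c) :: wArcs ((c, b, l') : Wk V) := by
      simp [wArcs, verts, arcs]
    rw [harc, show epCount u ((a, c) :: wArcs ((c, b, l') : Wk V))
      = ((if a = u then 1 else 0) + (if c = u then 1 else 0))
        + epCount u (wArcs ((c, b, l') : Wk V)) by simp [epCount], ih c b,
      count_cons'' u c l']
    split_ifs <;> ring

lemma ep_flat (u : V) : ∀ (L : List (Wk V)), (∀ w ∈ L, w.1 ≠ w.2.1) →
    epCount u (L.flatMap wArcs) = 2 * intCount u L + sc u L := by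
  intro L
  induction L with
  | nil => intro _; simp [epCount, intCount, sc]
  | cons w t ih =>
    intro hop
    obtain ⟨a, b, l⟩ := w
    have hopw : a ≠ b := hop (a, b, l) List.mem_cons_self
    rw [List.flatMap_cons, epCount_append, ep_chunk,
      ih (fun w' hw' => hop w' (List.mem_cons_of_mem _ hw')), sc_cons,
      show slots ((a, b, l) : Wk V) = [a, b] by simp [slots, hopw], count_pair,
      show intCount u (((a, b, l) : Wk V) :: t) = l.count u + intCount u t by simp [intCount]]
    ring

lemma ep_eq_countP (u : V) : ∀ (A : List (V × V)), (∀ p ∈ A, p.1 ≠ p.2) →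
    epCount u A = (A.map (fun p => s(p.1, p.2))).countP (fun e => decide (u ∈ e)) := by
  intro A
  induction A with
  | nil => intro _; simp [epCount]
  | cons p t ih =>
    intro hnd
    have hp : p.1 ≠ p.2 := hnd p List.mem_cons_self
    rw [List.map_cons, List.countP_cons,
      ← ih (fun q hq => hnd q (List.mem_cons_of_mem _ hq)),
      show epCount u (p :: t) = ((if p.1 = u then 1 else 0) + (if p.2 = u then 1 else 0))
        + epCount u t by simp [epCount]]
    have hmem : u ∈ s(p.1, p.2) ↔ p.1 = u ∨ p.2 = u := by
      rw [Sym2.mem_iff]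
      constructor
      · rintro (h | h) <;> [exact Or.inl h.symm; exact Or.inr h.symm]
      · rintro (h | h) <;> [exact Or.inl h.symm; exact Or.inr h.symm]
    by_cases h1 : p.1 = u <;> by_cases h2 : p.2 = u
    · exact absurd (h1.trans h2.symm) hp
    · rw [if_pos h1, if_neg h2, if_pos (by simp [hmem, h1])]
      ring
    · rw [if_neg h1, if_pos h2, if_pos (by simp [hmem, h2])]
      ring
    · rw [if_neg h1, if_neg h2, if_neg (by simp [hmem, h1, h2])]
      ring

end AMO

open AMO

/-- A finite simple graph `G` has an antimagic orientation if we can choose, for each edge,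
a head vertex (an endpoint of the edge, giving the orientation of that edge), together with
a bijective labeling of the edges by `{1, …, m}` (here realized as `Fin m` with label `f e + 1`),
such that all vertex-sums are pairwise distinct, where the vertex-sum of `u` is the sum of labels
of arcs entering `u` (those with head `u`) minus the sum of labels of arcs leaving `u`
(those incident to `u` whose head is not `u`). -/
def SimpleGraph.HasAntimagicOrientation {V : Type*} [Fintype V] [DecidableEq V]
    (G : SimpleGraph V) [DecidableRel G.Adj] : Prop :=
  ∃ head : G.edgeSet → V,
    (∀ e : G.edgeSet, head e ∈ (e : Sym2 V)) ∧
    ∃ f : G.edgeSet ≃ Fin G.edgeFinset.card,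
      ∀ u v : V, u ≠ v →
        ((∑ e : G.edgeSet, if head e = u then ((f e : ℕ) : ℤ) + 1 else 0)
          - ∑ e : G.edgeSet, if u ∈ (e : Sym2 V) ∧ head e ≠ u then ((f e : ℕ) : ℤ) + 1 else 0)
        ≠
        ((∑ e : G.edgeSet, if head e = v then ((f e : ℕ) : ℤ) + 1 else 0)
          - ∑ e : G.edgeSet, if v ∈ (e : Sym2 V) ∧ head e ≠ v then ((f e : ℕ) : ℤ) + 1 else 0)

/-- Every `(2d-1)`-regular graph with `d ≥ 1` admits an antimagic orientation. -/
theorem every_odd_regular_graph_has_antimagic_orientation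
    {V : Type*} [Fintype V] [DecidableEq V] (G : SimpleGraph V) [DecidableRel G.Adj]
    (d : ℕ) (hd : 1 ≤ d) (hreg : G.IsRegularOfDegree (2 * d - 1)) :
    G.HasAntimagicOrientation := by

  classical
  have hF : ∀ e ∈ G.edgeFinset, ¬ e.IsDiag := fun e he =>
    G.not_isDiag_of_mem_edgeSet (SimpleGraph.mem_edgeFinset.mp he)
  obtain ⟨L0, hE0, hS0⟩ := lemD G.edgeFinset hF
  have hdeg : ∀ v, dF G.edgeFinset v = G.degree v := by
    intro v
    rw [dF, ← SimpleGraph.card_incidenceFinset_eq_degree,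
      SimpleGraph.incidenceFinset_eq_filter]
  have hodd : ∀ v, Odd (dF G.edgeFinset v) := by
    intro v
    rw [hdeg v, hreg v]
    exact ⟨d - 1, by omega⟩
  have hS0' : ∀ v, sc v L0 = 1 := fun v => by rw [hS0 v, if_pos (hodd v)]
  obtain ⟨L, hEL, hsc, hop⟩ := elimAux (nClosed L0) L0 le_rfl hS0'
  rw [hE0] at hEL
  set A : List (V × V) := L.flatMap wArcs with hA
  set B : List (Sym2 V) := A.map (fun p => s(p.1, p.2)) with hBdef
  have hB : (↑B : Multiset (Sym2 V)) = G.edgeFinset.val := by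
    rw [hBdef, hA, List.map_flatMap]
    exact hEL
  have hBnd : B.Nodup := by
    have h := G.edgeFinset.nodup
    rw [← hB] at h
    exact Multiset.coe_nodup.mp h
  have hlenB : B.length = G.edgeFinset.card := by
    have h := congrArg Multiset.card hB
    simpa using h
  have hlenA : A.length = B.length := by simp [hBdef]
  have hcardA : G.edgeFinset.card = A.length := by omega
  have hmemB : ∀ e : Sym2 V, e ∈ B ↔ e ∈ G.edgeFinset := by
    intro e
    rw [Finset.mem_def, ← hB]
    exact Iff.rfl
  have hnd : ∀ p ∈ A, p.1 ≠ p.2 := by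
    intro p hp h12
    have hmm : s(p.1, p.2) ∈ B := List.mem_map_of_mem (f := fun p : V × V => s(p.1, p.2)) hp
    exact hF _ ((hmemB _).mp hmm) (by rw [Sym2.mk_isDiag_iff]; exact h12)
  have hib : ∀ i : Fin G.edgeFinset.card, (i : ℕ) < B.length := fun i => by
    rw [hlenB]; exact i.2
  set g : Fin G.edgeFinset.card → G.edgeSet := fun i =>
    ⟨B[(i : ℕ)]'(hib i), SimpleGraph.mem_edgeFinset.mp ((hmemB _).mp (B.getElem_mem _))⟩
    with hg
  have hginj : Function.Injective g := by
    intro i j hij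
    have h1 : B.get ⟨(i : ℕ), hib i⟩ = B.get ⟨(j : ℕ), hib j⟩ := congrArg Subtype.val hij
    have h2 := List.nodup_iff_injective_get.mp hBnd h1
    have h3 : (i : ℕ) = (j : ℕ) := by injection h2
    exact Fin.ext h3
  have hgbij : Function.Bijective g := by
    rw [Fintype.bijective_iff_injective_and_card]
    exact ⟨hginj, by simp [SimpleGraph.edgeFinset_card]⟩
  set f : G.edgeSet ≃ Fin G.edgeFinset.card := (Equiv.ofBijective g hgbij).symm with hf
  have hgf : ∀ e : G.edgeSet, g (f e) = e := fun e =>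
    (Equiv.ofBijective g hgbij).apply_symm_apply e
  have hfg : ∀ i, f (g i) = i := fun i =>
    (Equiv.ofBijective g hgbij).symm_apply_apply i
  have hia : ∀ i : Fin G.edgeFinset.card, (i : ℕ) < A.length := fun i => by
    rw [← hcardA]; exact i.2
  set head : G.edgeSet → V := fun e => (A[((f e) : ℕ)]'(hia (f e))).2 with hhead
  have hkey : ∀ e : G.edgeSet,
      (e : Sym2 V) = s((A[((f e) : ℕ)]'(hia (f e))).1, (A[((f e) : ℕ)]'(hia (f e))).2) := by
    intro e
    conv_lhs => rw [← hgf e]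
    show B[((f e) : ℕ)]'(hib (f e)) = _
    exact List.getElem_map _
  refine ⟨head, ?_, f, ?_⟩
  · intro e
    rw [hkey e]
    exact Sym2.mem_mk_right _ _
  · -- vertex sums
    have hsum : ∀ u : V,
        ((∑ e : G.edgeSet, if head e = u then ((f e : ℕ) : ℤ) + 1 else 0)
          - ∑ e : G.edgeSet, if u ∈ (e : Sym2 V) ∧ head e ≠ u then ((f e : ℕ) : ℤ) + 1 else 0)
        = -((d - 1 : ℕ) : ℤ) + ss u 0 L := by
      intro u
      have h1 : (∑ e : G.edgeSet, if head e = u then ((f e : ℕ) : ℤ) + 1 else 0)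
          = ∑ i : Fin G.edgeFinset.card,
              (if (A[(i : ℕ)]'(hia i)).2 = u then ((i : ℕ) : ℤ) + 1 else 0) := by
        apply Fintype.sum_equiv f
        intro e
        rfl
      have h2 : (∑ e : G.edgeSet, if u ∈ (e : Sym2 V) ∧ head e ≠ u then ((f e : ℕ) : ℤ) + 1 else 0)
          = ∑ i : Fin G.edgeFinset.card,
              (if (A[(i : ℕ)]'(hia i)).1 = u then ((i : ℕ) : ℤ) + 1 else 0) := by
        apply Fintype.sum_equiv f
        intro e
        have hnde : (A[((f e) : ℕ)]'(hia (f e))).1 ≠ (A[((f e) : ℕ)]'(hia (f e))).2 :=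
          hnd _ (A.getElem_mem _)
        congr 1
        rw [hkey e, eq_iff_iff, Sym2.mem_iff]
        constructor
        · rintro ⟨hmem, hne⟩
          rcases hmem with h | h
          · exact h.symm
          · exact absurd h.symm hne
        · intro h
          exact ⟨Or.inl h.symm, fun h2 => hnde (h.trans h2.symm)⟩
      rw [h1, h2, ← Finset.sum_sub_distrib]
      have h3 : ∑ i : Fin G.edgeFinset.card,
            ((if (A[(i : ℕ)]'(hia i)).2 = u then ((i : ℕ) : ℤ) + 1 else 0)
              - (if (A[(i : ℕ)]'(hia i)).1 = u then ((i : ℕ) : ℤ) + 1 else 0))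
          = ∑ i : Fin A.length,
            ((if (A.get i).2 = u then (0 : ℤ) + ((i : ℕ) : ℤ) + 1 else 0)
              - (if (A.get i).1 = u then (0 : ℤ) + ((i : ℕ) : ℤ) + 1 else 0)) := by
        apply Fintype.sum_equiv (finCongr hcardA)
        intro i
        show ((if (A[(i : ℕ)]'(hia i)).2 = u then ((i : ℕ) : ℤ) + 1 else 0)
            - (if (A[(i : ℕ)]'(hia i)).1 = u then ((i : ℕ) : ℤ) + 1 else 0))
          = ((if (A[(i : ℕ)]'(hia i)).2 = u then (0 : ℤ) + ((i : ℕ) : ℤ) + 1 else 0)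
            - (if (A[(i : ℕ)]'(hia i)).1 = u then (0 : ℤ) + ((i : ℕ) : ℤ) + 1 else 0))
        split_ifs <;> ring
      rw [h3, sum_fin_val u A 0, hA, val_flat]
      have hic : intCount u L = d - 1 := by
        have he1 := ep_flat u L hop
        rw [hsc u, ← hA] at he1
        have he2 := ep_eq_countP u A hnd
        have he3 : ((A.map (fun p => s(p.1, p.2))).countP (fun e => decide (u ∈ e)))
            = dF G.edgeFinset u := by
          rw [dF]
          have h5 : (Finset.filter (fun e => u ∈ e) G.edgeFinset).card
              = Multiset.card (Multiset.filter (fun e => u ∈ e) (↑B : Multiset (Sym2 V))) := by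
            rw [hB, ← Finset.filter_val]
            rfl
          rw [h5, Multiset.filter_coe, Multiset.coe_card, List.countP_eq_length_filter]
        have hdu : dF G.edgeFinset u = 2 * d - 1 := by rw [hdeg u, hreg u]
        omega
      rw [hic]
    intro u v huv
    rw [hsum u, hsum v]
    intro heq
    exact ss_inj u v huv L 0 hop (hsc u) (hsc v) le_rfl (by omega)
end

section
/- For every integer d ≥ 1, every finite connected 2d-regular simple graph G that has a matching covering all but at most one vertex of G admits an antimagic orientation. -/
section AntimagicAux

open SimpleGraph Walk List Finset



variable {V : Type*} [Fintype V] [DecidableEq V]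

private lemma countP_eq_card_filter_toFinset {l : List (Sym2 V)} (hl : l.Nodup) (y : V) :
    l.countP (fun e => decide (y ∈ e)) = (l.toFinset.filter (fun e => y ∈ e)).card := by
  have h1 : (l.filter (fun e => decide (y ∈ e))).toFinset = l.toFinset.filter (fun e => y ∈ e) := by
    ext e; simp [List.mem_filter]
  rw [← h1, List.card_toFinset, List.Nodup.dedup (hl.filter _), List.countP_eq_length_filter]

private lemma trail_extension {H : SimpleGraph V} [DecidableRel H.Adj]
    (heven : ∀ v, Even (H.degree v)) {y z : V} (q : H.Walk y z) (hq : q.IsTrail)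
    (hne : y ≠ z) : ∃ w, ∃ _h : H.Adj y w, s(y, w) ∉ q.edges := by
  by_contra hcon
  push_neg at hcon
  have hF : q.edges.toFinset.filter (fun e => y ∈ e) = H.incidenceFinset y := by
    ext e
    simp only [Finset.mem_filter, List.mem_toFinset, mem_incidenceFinset]
    constructor
    · rintro ⟨he, hy⟩
      exact ⟨q.edges_subset_edgeSet he, hy⟩
    · rintro ⟨he, hy⟩
      obtain ⟨w, rfl⟩ := Sym2.mem_iff_exists.mp hy
      exact ⟨hcon w (H.mem_edgeSet.mp he), Sym2.mem_mk_left _ _⟩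
  have hodd : ¬ Even (q.edges.countP (fun e => decide (y ∈ e))) := by
    rw [hq.even_countP_edges_iff y]
    exact fun h => (h hne).1 rfl
  rw [countP_eq_card_filter_toFinset hq.edges_nodup, hF,
    card_incidenceFinset_eq_degree] at hodd
  exact hodd (heven y)

private lemma grow_to_closed {H : SimpleGraph V} [DecidableRel H.Adj]
    (heven : ∀ v, Even (H.degree v)) :
    ∀ (n : ℕ) {y z : V} (q : H.Walk y z), q.IsTrail →
      H.edgeFinset.card - q.edges.length ≤ n →
      ∃ q' : H.Walk z z, q'.IsTrail ∧ ∀ e ∈ q.edges, e ∈ q'.edges := by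
  intro n
  induction n with
  | zero =>
    intro y z q hq hn
    by_cases hyz : y = z
    · subst hyz; exact ⟨q, hq, fun _ h => h⟩
    · exfalso
      obtain ⟨w, hadj, hnot⟩ := trail_extension heven q hq hyz
      have hq2 : (Walk.cons hadj.symm q).IsTrail := by
        rw [isTrail_cons]
        refine ⟨hq, ?_⟩
        rwa [Sym2.eq_swap]
      have hsub : (Walk.cons hadj.symm q).edges.toFinset ⊆ H.edgeFinset := by
        intro e he
        rw [mem_edgeFinset]
        exact (Walk.cons hadj.symm q).edges_subset_edgeSet (List.mem_toFinset.mp he)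
      have hcard := Finset.card_le_card hsub
      rw [List.card_toFinset, hq2.edges_nodup.dedup] at hcard
      simp only [edges_cons, List.length_cons] at hcard
      omega
  | succ n ih =>
    intro y z q hq hn
    by_cases hyz : y = z
    · subst hyz; exact ⟨q, hq, fun _ h => h⟩
    · obtain ⟨w, hadj, hnot⟩ := trail_extension heven q hq hyz
      have hq2 : (Walk.cons hadj.symm q).IsTrail := by
        rw [isTrail_cons]
        refine ⟨hq, ?_⟩
        rwa [Sym2.eq_swap]
      have hlen : (Walk.cons hadj.symm q).edges.length = q.edges.length + 1 := by
        simp [edges_cons]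
      obtain ⟨q', h1, h2⟩ := ih (Walk.cons hadj.symm q) hq2 (by omega)
      refine ⟨q', h1, fun e he => h2 e ?_⟩
      simp only [edges_cons, List.mem_cons]
      exact Or.inr he

private lemma find_attach {G : SimpleGraph V} {x : V} {c : G.Walk x x} :
    ∀ {a b : V} (W : G.Walk a b), a ∈ c.support →
      (∃ w, G.Adj b w ∧ s(b, w) ∉ c.edges) →
      ∃ z, z ∈ c.support ∧ ∃ w, G.Adj z w ∧ s(z, w) ∉ c.edges := by
  intro a b W
  induction W with
  | nil => intro ha hb; exact ⟨_, ha, hb⟩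
  | @cons a a' b h p ih =>
    intro ha hb
    by_cases he : s(a, a') ∈ c.edges
    · refine ih ?_ hb
      apply Walk.fst_mem_support_of_mem_edges c
      rwa [Sym2.eq_swap]
    · exact ⟨a, ha, a', h, he⟩

theorem exists_eulerian_circuit (G : SimpleGraph V) [DecidableRel G.Adj]
    (hconn : G.Connected) (heven : ∀ v, Even (G.degree v)) :
    ∃ (x : V) (p : G.Walk x x), p.IsEulerian := by
  classical
  obtain ⟨x0⟩ := hconn.nonempty
  suffices h : ∀ (n : ℕ) (x : V) (c : G.Walk x x), c.IsTrail →
      G.edgeFinset.card - c.edges.length ≤ n → ∃ (y : V) (p : G.Walk y y), p.IsEulerian by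
    exact h G.edgeFinset.card x0 Walk.nil Walk.IsTrail.nil (by simp)
  intro n
  induction n with
  | zero =>
    intro x c hc hn
    refine ⟨x, c, hc.isEulerian_of_forall_mem fun e he => ?_⟩
    have hsub : c.edges.toFinset ⊆ G.edgeFinset := by
      intro e' he'
      rw [mem_edgeFinset]
      exact c.edges_subset_edgeSet (List.mem_toFinset.mp he')
    have hcard : G.edgeFinset.card ≤ c.edges.length := by
      omega
    have : c.edges.toFinset = G.edgeFinset := by
      apply Finset.eq_of_subset_of_card_le hsub
      rw [List.card_toFinset, hc.edges_nodup.dedup]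
      exact hcard
    rw [← List.mem_toFinset, this, mem_edgeFinset]
    exact he
  | succ n ih =>
    intro x c hc hn
    by_cases hall : ∀ e ∈ G.edgeSet, e ∈ c.edges
    · exact ⟨x, c, hc.isEulerian_of_forall_mem hall⟩
    · push_neg at hall
      obtain ⟨e, he, hne⟩ := hall
      -- find attach point
      have key : ∃ z, z ∈ c.support ∧ ∃ w, G.Adj z w ∧ s(z, w) ∉ c.edges := by
        induction e using Sym2.inductionOn with
        | hf u w =>
          obtain ⟨W⟩ := hconn.preconnected x u
          exact find_attach W c.start_mem_support ⟨w, G.mem_edgeSet.mp he, hne⟩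
      obtain ⟨z, hz, w, hadj, hnot⟩ := key
      set H : SimpleGraph V := G.deleteEdges {e | e ∈ c.edges} with hH
      letI : DecidableRel H.Adj := Classical.decRel _
      -- degrees of H are even
      have hnb : ∀ v, H.neighborFinset v
          = (G.neighborFinset v).filter (fun u => s(v, u) ∉ c.edges) := by
        intro v
        ext u
        simp only [mem_neighborFinset, Finset.mem_filter, hH, deleteEdges_adj,
          Set.mem_setOf_eq]
      have hcount : ∀ v, ((G.neighborFinset v).filter (fun u => s(v, u) ∈ c.edges)).card
          = c.edges.countP (fun e => decide (v ∈ e)) := by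
        intro v
        rw [countP_eq_card_filter_toFinset hc.edges_nodup]
        apply Finset.card_bij (fun u _ => s(v, u))
        · intro u hu
          simp only [Finset.mem_filter, mem_neighborFinset] at hu
          simp only [Finset.mem_filter, List.mem_toFinset]
          exact ⟨hu.2, Sym2.mem_mk_left _ _⟩
        · intro u1 h1 u2 h2 h
          exact Sym2.congr_right.mp h
        · intro e he'
          simp only [Finset.mem_filter, List.mem_toFinset] at he'
          obtain ⟨u, rfl⟩ := Sym2.mem_iff_exists.mp he'.2
          have : G.Adj v u := G.mem_edgeSet.mp (c.edges_subset_edgeSet he'.1)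
          exact ⟨u, by simp [Finset.mem_filter, mem_neighborFinset, this, he'.1], rfl⟩
      have hevenH : ∀ v, Even (H.degree v) := by
        intro v
        have hsplit : (G.neighborFinset v).filter (fun u => s(v, u) ∉ c.edges) =
            G.neighborFinset v \ (G.neighborFinset v).filter (fun u => s(v, u) ∈ c.edges) := by
          rw [Finset.filter_not]
        have hdeg : H.degree v = G.degree v
            - c.edges.countP (fun e => decide (v ∈ e)) := by
          rw [degree, hnb v, hsplit, Finset.card_sdiff_of_subset (Finset.filter_subset _ _), hcount v]
          rfl
        have hle : c.edges.countP (fun e => decide (v ∈ e)) ≤ G.degree v := by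
          rw [← hcount v]
          exact (Finset.card_filter_le _ _).trans (le_of_eq rfl)
        have hev2 : Even (c.edges.countP (fun e => decide (v ∈ e))) := by
          rw [hc.even_countP_edges_iff v]
          intro h; exact absurd rfl h
        rw [hdeg]
        exact (heven v).tsub hev2
      -- initial walk in H
      have hadjH : H.Adj w z := by
        rw [hH, deleteEdges_adj]
        refine ⟨hadj.symm, ?_⟩
        simp only [Set.mem_setOf_eq]
        rwa [Sym2.eq_swap]
      have hq0 : (Walk.cons hadjH (Walk.nil : H.Walk z z)).IsTrail := by
        simp [isTrail_cons]
      obtain ⟨q', hq', hq'mem⟩ := grow_to_closed hevenH H.edgeFinset.card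
        (Walk.cons hadjH Walk.nil) hq0 (by omega)
      have hq'G : ∀ e ∈ q'.edges, e ∈ G.edgeSet := by
        intro e he'
        have := q'.edges_subset_edgeSet he'
        rw [hH, edgeSet_deleteEdges] at this
        exact this.1
      have hq'not : ∀ e ∈ q'.edges, e ∉ c.edges := by
        intro e he'
        have := q'.edges_subset_edgeSet he'
        rw [hH, edgeSet_deleteEdges] at this
        exact this.2
      set qG := q'.transfer G hq'G with hqG
      set c' : G.Walk z z := (c.rotate z hz).append qG with hc'
      have hrotperm : (c.rotate z hz).edges.Perm c.edges := (c.rotate_edges z hz).perm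
      have hc'edges : c'.edges = (c.rotate z hz).edges ++ qG.edges := edges_append _ _
      have hqGedges : qG.edges = q'.edges := edges_transfer _ _
      have hc'trail : c'.IsTrail := by
        rw [isTrail_def, hc'edges, List.nodup_append]
        refine ⟨hrotperm.nodup_iff.mpr hc.edges_nodup, ?_, ?_⟩
        · rw [hqGedges]; exact hq'.edges_nodup
        · intro e he1 b he2 hbe
          rw [hqGedges] at he2
          subst hbe
          exact hq'not e he2 (hrotperm.mem_iff.mp he1)
      have hwz : s(w, z) ∈ q'.edges := hq'mem _ (by simp [edges_cons])
      have hlen : c.edges.length < c'.edges.length := by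
        rw [hc'edges, List.length_append, hrotperm.length_eq, hqGedges]
        have : 0 < q'.edges.length := List.length_pos_iff.mpr (List.ne_nil_of_mem hwz)
        omega
      have hbound : c'.edges.length ≤ G.edgeFinset.card := by
        have hsub : c'.edges.toFinset ⊆ G.edgeFinset := by
          intro e' he'
          rw [mem_edgeFinset]
          exact c'.edges_subset_edgeSet (List.mem_toFinset.mp he')
        have := Finset.card_le_card hsub
        rwa [List.card_toFinset, hc'trail.edges_nodup.dedup] at this
      exact ih z c' hc'trail (by omega)


private lemma fin_val_add_one {m : ℕ} [NeZero m] (hm2 : 1 < m) (i : Fin m) :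
    ((i + 1 : Fin m)).val = if i.val + 1 = m then 0 else i.val + 1 := by
  have h1 : ((1 : Fin m)).val = 1 := by rw [Fin.val_one']; exact Nat.mod_eq_of_lt hm2
  rw [Fin.val_add_eq_ite, h1]
  have := i.isLt
  split_ifs <;> omega

theorem exists_tour (G : SimpleGraph V) [DecidableRel G.Adj]
    (hconn : G.Connected) (heven : ∀ v, Even (G.degree v)) {m : ℕ}
    (hm : G.edgeFinset.card = m) [NeZero m] (hm2 : 1 < m) :
    ∃ A : Fin m → G.Dart, (∀ i, (A (i + 1)).fst = (A i).snd) ∧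
      Function.Bijective (fun i => (⟨(A i).edge, (A i).edge_mem⟩ : G.edgeSet)) := by
  classical
  obtain ⟨y, p, hp⟩ := exists_eulerian_circuit G hconn heven
  have hnd : p.edges.Nodup := hp.isTrail.edges_nodup
  have hfe : p.edges.toFinset = G.edgeFinset := by
    refine Finset.ext fun e => ?_
    rw [List.mem_toFinset, mem_edgeFinset]
    exact ⟨fun h => p.edges_subset_edgeSet h,
      fun he => List.count_pos_iff.mp (by have := hp e he; omega)⟩
  have hlen : p.darts.length = m := by
    rw [length_darts, ← length_edges, ← hm, ← hfe, List.card_toFinset, hnd.dedup]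
  have hsup : p.support.length = m + 1 := by
    rw [length_support, ← hlen, length_darts]
  set A : Fin m → G.Dart := fun i => p.darts[i.val]'(by rw [hlen]; exact i.isLt) with hA
  have hedges : ∀ i : Fin m,
      p.edges[i.val]'(by rw [length_edges, ← length_darts, hlen]; exact i.isLt)
        = (A i).edge := by
    intro i
    have : p.edges = p.darts.map Dart.edge := rfl
    simp only [hA]
    simp [this, List.getElem_map]
  have hfst : ∀ i : Fin m, (A i).fst = p.support[i.val]'(by rw [hsup]; omega) := by
    intro i
    have h1 := p.map_fst_darts
    have h2 : (A i).fst = (p.darts.map (fun x => x.toProd.1))[i.val]'(by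
        rw [List.length_map, hlen]; exact i.isLt) := by
      simp [hA, List.getElem_map]
    rw [h2, List.getElem_of_eq h1, List.getElem_dropLast]
  have hsnd : ∀ i : Fin m, (A i).snd = p.support[i.val + 1]'(by rw [hsup]; omega) := by
    intro i
    have h1 := p.map_snd_darts
    have h2 : (A i).snd = (p.darts.map (fun x => x.toProd.2))[i.val]'(by
        rw [List.length_map, hlen]; exact i.isLt) := by
      simp [hA, List.getElem_map]
    rw [h2, List.getElem_of_eq h1, List.getElem_tail]
  have hsup0 : p.support[0]'(by omega) = y := by
    rw [List.getElem_of_eq p.support_eq_cons]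
    exact List.getElem_cons_zero _ _ _
  have hsupm : p.support[m]'(by omega) = y := by
    have h3 := p.getLast_support
    rw [List.getLast_eq_getElem] at h3
    simp only [hsup, Nat.add_sub_cancel] at h3
    exact h3
  have hchain : ∀ i : Fin m, (A (i + 1)).fst = (A i).snd := by
    intro i
    rw [hfst, hsnd]
    rcases eq_or_ne (i.val + 1) m with h | h
    · have hv : ((i + 1 : Fin m)).val = 0 := by rw [fin_val_add_one hm2]; simp [h]
      have : p.support[((i+1 : Fin m)).val]'(by rw [hsup]; omega)
          = p.support[0]'(by omega) := by congr 1
      rw [this, hsup0]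
      have : p.support[i.val + 1]'(by rw [hsup]; omega) = p.support[m]'(by omega) := by
        congr 1
      rw [this, hsupm]
    · have hv : ((i + 1 : Fin m)).val = i.val + 1 := by
        rw [fin_val_add_one hm2]; simp [h]
      congr 1
  refine ⟨A, hchain, ?_⟩
  rw [Fintype.bijective_iff_injective_and_card]
  refine ⟨?_, ?_⟩
  · intro i j hij
    have h0 : (A i).edge = (A j).edge := congrArg Subtype.val hij
    rw [← hedges i, ← hedges j] at h0
    have hlene : p.edges.length = m := by rw [length_edges, ← length_darts, hlen]
    have hij' := (List.Nodup.getElem_inj_iff hnd).mp h0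
    exact Fin.ext hij' 
  · show Fintype.card (Fin m) = Fintype.card G.edgeSet
    rw [Fintype.card_fin, ← hm, G.edgeFinset_card]

end AntimagicAux

section AntimagicAux2

open SimpleGraph Finset

variable {V : Type*} [Fintype V] [DecidableEq V]

private lemma fin_last_add_one {m : ℕ} [NeZero m] (hm2 : 1 < m) :
    (⟨m - 1, by omega⟩ : Fin m) + 1 = 0 := by
  apply Fin.ext
  rw [fin_val_add_one hm2]
  have h : m - 1 + 1 = m := by omega
  rw [if_pos h]
  simp


private theorem core_antimagic (G : SimpleGraph V) [DecidableRel G.Adj]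
    (d : ℕ) (hreg : G.IsRegularOfDegree (2 * d))
    (M : G.Subgraph) (hM : M.IsMatching)
    {m : ℕ} (hm : G.edgeFinset.card = m) [NeZero m] (hm2 : 1 < m)
    (A : Fin m → G.Dart)
    (hchain : ∀ i, (A (i + 1)).fst = (A i).snd)
    (hbij : Function.Bijective (fun i => (⟨(A i).edge, (A i).edge_mem⟩ : G.edgeSet)))
    (hcov : ∀ v, v ∉ M.verts → v = (A 0).fst)
    (hcase : (A 0).fst ∉ M.verts ∨ (A ⟨m - 1, by omega⟩).edge ∈ M.edgeSet) :
    G.HasAntimagicOrientation := by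
  classical
  set x : V := (A 0).fst with hxdef
  set last : Fin m := ⟨m - 1, by omega⟩ with hlastdef
  set φ : Fin m ≃ G.edgeSet := Equiv.ofBijective _ hbij with hφdef
  have hφval : ∀ i, ((φ i : G.edgeSet) : Sym2 V) = (A i).edge := fun i => rfl
  have hedge_inj : ∀ i j, (A i).edge = (A j).edge → i = j :=
    fun i j h => hbij.1 (Subtype.ext h)
  have hAne : ∀ i, (A i).fst ≠ (A i).snd := fun i => (A i).adj.ne
  have hmem : ∀ (i : Fin m) (v : V), v ∈ (A i).edge ↔ v = (A i).fst ∨ v = (A i).snd :=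
    fun i v => Sym2.mem_iff
  -- index arithmetic
  have hlast1 : last + 1 = 0 := by
    apply Fin.ext
    rw [fin_val_add_one hm2]
    simp [hlastdef]
    omega
  have hsuccval : ∀ i : Fin m, i ≠ last → ((i + 1 : Fin m)).val = i.val + 1 := by
    intro i hi
    rw [fin_val_add_one hm2]
    have h2 : i.val ≠ m - 1 := fun h => hi (Fin.ext (by simp [hlastdef, h]))
    have := i.isLt
    split_ifs with h
    · omega
    · rfl
  have hone_ne : (1 : Fin m) ≠ 0 := by
    intro h
    have := congrArg Fin.val h
    rw [Fin.val_one'] at this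
    simp at this
    omega
  have hwrap : (A last).snd = x := by
    have h := hchain last
    rw [hlast1] at h
    exact h.symm
  -- matching positions
  set P : Finset (Fin m) := univ.filter (fun i => (A i).edge ∈ M.edgeSet) with hPdef
  set k : ℕ := P.card with hkdef
  have hPmem : ∀ i, i ∈ P ↔ (A i).edge ∈ M.edgeSet := by
    intro i; rw [hPdef, mem_filter]; simp
  have hpM : ∀ u, u ∈ M.verts → ∃ i, (i ∈ P ∧ u ∈ (A i).edge) ∧
      ∀ j, j ∈ P → u ∈ (A j).edge → j = i := by
    intro u hu
    obtain ⟨w, hw, huniq⟩ := hM hu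
    have hedge : s(u, w) ∈ M.edgeSet := Subgraph.mem_edgeSet.mpr hw
    have hedgeG : s(u, w) ∈ G.edgeSet := M.edgeSet_subset hedge
    have hival : (A (φ.symm ⟨s(u, w), hedgeG⟩)).edge = s(u, w) := by
      have h2 := hφval (φ.symm ⟨s(u, w), hedgeG⟩)
      rw [Equiv.apply_symm_apply] at h2
      exact h2.symm
    refine ⟨φ.symm ⟨s(u, w), hedgeG⟩, ⟨?_, ?_⟩, ?_⟩
    · rw [hPmem, hival]; exact hedge
    · rw [hival]; exact Sym2.mem_mk_left _ _
    · intro j hj hjmem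
      obtain ⟨w', hw'⟩ := Sym2.mem_iff_exists.mp hjmem
      have hadj' : M.Adj u w' := Subgraph.mem_edgeSet.mp (by rw [← hw']; exact (hPmem j).mp hj)
      have hww : w' = w := huniq w' hadj'
      apply hedge_inj
      rw [hival, hw', hww]
  have hPadj : ∀ i, i ∈ P → (i + 1) ∉ P := by
    intro i hi hip
    have hv1 : (A i).snd ∈ (A i).edge := (hmem i _).mpr (Or.inr rfl)
    have hv2 : (A i).snd ∈ (A (i + 1)).edge := (hmem _ _).mpr (Or.inl (hchain i).symm)
    have hvert : (A i).snd ∈ M.verts :=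
      Subgraph.mem_verts_of_mem_edge ((hPmem i).mp hi) hv1
    obtain ⟨i0, _, huniq⟩ := hpM _ hvert
    have h1 := huniq i hi hv1
    have h2 := huniq (i + 1) hip hv2
    have h3 : i + 1 = i + 0 := by rw [h2.trans h1.symm, add_zero]
    exact hone_ne (add_left_cancel h3)
  have h0P : (0 : Fin m) ∉ P := by
    rcases hcase with h | h
    · intro h0
      have hx0 : x ∈ (A 0).edge := (hmem 0 x).mpr (Or.inl rfl)
      exact h (Subgraph.mem_verts_of_mem_edge ((hPmem 0).mp h0) hx0)
    · have hlastP : last ∈ P := (hPmem last).mpr h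
      have := hPadj last hlastP
      rwa [hlast1] at this
  have hkm : k ≤ m - 1 := by
    have hsub : P ⊆ univ.erase 0 := fun i hi => mem_erase.mpr ⟨fun h => h0P (h ▸ hi), mem_univ i⟩
    have := card_le_card hsub
    rw [card_erase_of_mem (mem_univ 0)] at this
    simpa using this
  -- ranks and labels
  set rk : Finset (Fin m) → Fin m → ℕ := fun S i => (S.filter (fun j => j.val < i.val)).card
    with hrkdef
  set Q : Finset (Fin m) := Pᶜ with hQdef
  have hQmem : ∀ i, i ∈ Q ↔ i ∉ P := fun i => mem_compl
  have hQcard : Q.card = m - k := by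
    rw [hQdef, card_compl, hkdef]
    simp
  have hrk_lt : ∀ (S : Finset (Fin m)) i, i ∈ S → rk S i < S.card := by
    intro S i hi
    simp only [hrkdef]
    apply card_lt_card
    refine ⟨filter_subset _ _, fun hsub => ?_⟩
    have := hsub hi
    simp only [mem_filter] at this
    omega
  have hrk_strict : ∀ (S : Finset (Fin m)) i j, i ∈ S → i.val < j.val → rk S i < rk S j := by
    intro S i j hi hij
    simp only [hrkdef]
    have hsub : insert i (S.filter (fun a => a.val < i.val)) ⊆ S.filter (fun a => a.val < j.val) := by
      intro a ha
      rcases mem_insert.mp ha with rfl | ha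
      · exact mem_filter.mpr ⟨hi, hij⟩
      · have := mem_filter.mp ha
        exact mem_filter.mpr ⟨this.1, by omega⟩
    have hcard := card_le_card hsub
    rw [card_insert_of_notMem (by simp [mem_filter])] at hcard
    omega
  have hrk_succ : ∀ (S : Finset (Fin m)) (i : Fin m), i ≠ last →
      rk S (i + 1) = rk S i + (if i ∈ S then 1 else 0) := by
    intro S i hi
    have hv := hsuccval i hi
    simp only [hrkdef]
    have hset : S.filter (fun j => j.val < ((i + 1) : Fin m).val) =
        (if i ∈ S then insert i (S.filter (fun j => j.val < i.val))
          else S.filter (fun j => j.val < i.val)) := by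
      ext a
      have hane : a ≠ i → a.val ≠ i.val := fun h1 h2 => h1 (Fin.ext h2)
      split_ifs with h
      · simp only [mem_filter, mem_insert]
        constructor
        · rintro ⟨haS, hav⟩
          rw [hv] at hav
          rcases eq_or_ne a i with rfl | hne
          · exact Or.inl rfl
          · exact Or.inr ⟨haS, by have := hane hne; omega⟩
        · rintro (rfl | ⟨haS, hav⟩)
          · exact ⟨h, by rw [hv]; omega⟩
          · exact ⟨haS, by rw [hv]; omega⟩
      · simp only [mem_filter]
        constructor
        · rintro ⟨haS, hav⟩
          rw [hv] at hav
          have hne : a ≠ i := fun hh => h (hh ▸ haS)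
          have := hane hne
          exact ⟨haS, by omega⟩
        · rintro ⟨haS, hav⟩
          exact ⟨haS, by rw [hv]; omega⟩
    rw [hset]
    split_ifs with h
    · rw [card_insert_of_notMem (by simp [mem_filter])]
    · simp
  have hrk_last : ∀ S : Finset (Fin m), rk S last = S.card - (if last ∈ S then 1 else 0) := by
    intro S
    simp only [hrkdef]
    have hset : S.filter (fun j => j.val < last.val) = S.erase last := by
      ext a
      simp only [mem_filter, mem_erase]
      have ha := a.isLt
      have hlv : (last : Fin m).val = m - 1 := rfl
      constructor
      · rintro ⟨h1, h2⟩
        refine ⟨fun hh => ?_, h1⟩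
        rw [hh] at h2
        omega
      · rintro ⟨h1, h2⟩
        refine ⟨h2, ?_⟩
        have : a.val ≠ m - 1 := fun hh => h1 (Fin.ext (hh.trans hlv.symm))
        omega
    rw [hset, card_erase_eq_ite]
    split_ifs with h
    · rfl
    · simp
  have hrk_zero : ∀ S : Finset (Fin m), rk S 0 = 0 := by
    intro S
    simp only [hrkdef]
    rw [card_eq_zero, filter_eq_empty_iff]
    intro j _
    simp
  have htotal : ∀ i : Fin m, rk P i + rk Q i = i.val := by
    intro i
    have him := i.isLt
    simp only [hrkdef, hQdef]
    have hdisj : Disjoint (P.filter (fun j => j.val < i.val)) (Pᶜ.filter (fun j => j.val < i.val)) :=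
      disjoint_filter_filter disjoint_compl_right
    rw [← card_union_of_disjoint hdisj, ← filter_union, union_compl]
    have : (univ.filter (fun j : Fin m => j.val < i.val)).card = (Finset.range i.val).card := by
      apply card_bij (fun j _ => j.val)
      · intro a ha
        simp only [mem_filter] at ha
        exact mem_range.mpr ha.2
      · intro a _ b _ h
        exact Fin.ext h
      · intro b hb
        have hb' := mem_range.mp hb
        refine ⟨⟨b, by omega⟩, ?_, rfl⟩
        simp only [mem_filter, mem_univ, true_and]
        exact hb'
    rw [this, card_range]
  have hrkP_le : ∀ i, rk P i ≤ i.val := fun i => by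
    have := htotal i; omega
  set c : Fin m → Fin m := fun i =>
    if i ∈ P then ⟨rk P i, lt_of_le_of_lt (hrkP_le i) i.isLt⟩
    else ⟨m - 1 - rk Q i, by have h2 := hm2; omega⟩ with hcdef
  have hrkQ_le : ∀ i, rk Q i ≤ i.val := fun i => by have := htotal i; omega
  have hcbij : Function.Bijective c := by
    rw [← Finite.injective_iff_bijective]
    intro i j hij
    have hval := congrArg Fin.val hij
    by_cases hi : i ∈ P <;> by_cases hj : j ∈ P
    · simp only [hcdef, if_pos hi, if_pos hj] at hval
      rcases lt_trichotomy i.val j.val with h | h | h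
      · exact absurd hval (ne_of_lt (hrk_strict P i j hi h))
      · exact Fin.ext h
      · exact absurd hval.symm (ne_of_lt (hrk_strict P j i hj h))
    · exfalso
      have h1 : rk P i < k := by rw [hkdef]; exact hrk_lt P i hi
      have h2 : rk Q j < m - k := by rw [← hQcard]; exact hrk_lt Q j ((hQmem j).mpr hj)
      simp only [hcdef, if_pos hi, if_neg hj] at hval
      have h3 := hrkQ_le j
      have h4 := j.isLt
      omega
    · exfalso
      have h1 : rk P j < k := by rw [hkdef]; exact hrk_lt P j hj
      have h2 : rk Q i < m - k := by rw [← hQcard]; exact hrk_lt Q i ((hQmem i).mpr hi)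
      simp only [hcdef, if_neg hi, if_pos hj] at hval
      have h3 := hrkQ_le i
      have h4 := i.isLt
      omega
    · simp only [hcdef, if_neg hi, if_neg hj] at hval
      have h3 := hrkQ_le i
      have h4 := hrkQ_le j
      have h5 := i.isLt
      have h6 := j.isLt
      have hval' : rk Q i = rk Q j := by omega
      rcases lt_trichotomy i.val j.val with h | h | h
      · exact absurd hval' (ne_of_lt (hrk_strict Q i j ((hQmem i).mpr hi) h))
      · exact Fin.ext h
      · exact absurd hval'.symm (ne_of_lt (hrk_strict Q j i ((hQmem j).mpr hj) h))
  set L : Fin m → ℤ := fun i => ((c i).val : ℤ) + 1 with hLdef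
  have hLP : ∀ i, i ∈ P → L i = (rk P i : ℤ) + 1 := by
    intro i hi; rw [hLdef, hcdef]; simp [hi]
  have hLN : ∀ i, i ∉ P → L i = (m : ℤ) - (rk Q i : ℤ) := by
    intro i hi
    rw [hLdef, hcdef]
    simp only [hi, if_false]
    have h1 : rk Q i ≤ i.val := by have := htotal i; omega
    have h2 := i.isLt
    push_cast
    omega
  have hL0 : L 0 = (m : ℤ) := by
    rw [hLN 0 h0P, hrk_zero]
    simp
  set corr : Fin m → ℤ := fun i => L i - L (i + 1) - 1 with hcorrdef
  have hcorr0 : ∀ i, i ∉ P → (i + 1) ∉ P → i ≠ last → corr i = 0 := by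
    intro i hiP hi1P hilast
    simp only [hcorrdef]
    rw [hLN i hiP, hLN _ hi1P, hrk_succ Q i hilast, if_pos ((hQmem i).mpr hiP)]
    have h1 := hrkQ_le i
    have h2 := i.isLt
    push_cast
    omega
  have hcorrP : ∀ i, i ∈ P → i ≠ last → corr i = (i.val : ℤ) - m := by
    intro i hi hilast
    have h1P : (i + 1) ∉ P := hPadj i hi
    simp only [hcorrdef]
    rw [hLP i hi, hLN _ h1P, hrk_succ Q i hilast, if_neg (fun h => ((hQmem i).mp h) hi)]
    have h2 := htotal i
    have h4 := i.isLt
    push_cast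
    omega
  have hcorrPrev : ∀ p : Fin m, p ∈ P →
      corr ⟨p.val - 1, by omega⟩ = (m : ℤ) - (p.val : ℤ) - 1 := by
    intro p hp
    have hp0 : p ≠ 0 := fun h => h0P (h ▸ hp)
    have hpval : 1 ≤ p.val := by
      rcases Nat.eq_zero_or_pos p.val with h | h
      · exact absurd (Fin.ext (by simp [h]) : p = 0) hp0
      · exact h
    have hplt := p.isLt
    set q : Fin m := ⟨p.val - 1, by omega⟩ with hqdef
    have hq1 : q + 1 = p := by
      apply Fin.ext
      rw [fin_val_add_one hm2]
      have hqval : (q : Fin m).val = p.val - 1 := rfl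
      split_ifs with h
      · omega
      · omega
    have hqP : q ∉ P := by
      intro hqP
      have := hPadj q hqP
      rw [hq1] at this
      exact this hp
    have hqlast : q ≠ last := by
      intro h
      rw [h] at hq1
      rw [hlast1] at hq1
      exact hp0 hq1.symm
    simp only [hcorrdef]
    rw [hq1, hLN q hqP, hLP p hp]
    have hsq := hrk_succ Q q hqlast
    rw [hq1, if_pos ((hQmem q).mpr hqP)] at hsq
    have h2 := htotal p
    have h3 := htotal q
    have hqval : (q : Fin m).val = p.val - 1 := rfl
    push_cast
    omega
  set ε : ℕ := if last ∈ P then 1 else 0 with hεdef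
  have hcorrLast : corr last = (k : ℤ) - m - ε := by
    simp only [hcorrdef]
    rw [hlast1, hL0]
    by_cases h : last ∈ P
    · rw [hLP last h]
      have h1 : rk P last = k - 1 := by
        rw [hrk_last P, if_pos h, hkdef]
      have h2 : 1 ≤ k := by rw [hkdef]; exact card_pos.mpr ⟨last, h⟩
      rw [h1]
      simp only [hεdef, if_pos h]
      push_cast
      omega
    · rw [hLN last h]
      have h1 : rk Q last = m - k - 1 := by
        rw [hrk_last Q, if_pos ((hQmem last).mpr h), hQcard]
      rw [h1]
      simp only [hεdef, if_neg h]
      have h3 := hkm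
      have h4 : 1 ≤ m := by omega
      push_cast
      omega
  -- the orientation and labeling
  set head : G.edgeSet → V := fun e => if φ.symm e = 0 then x else (A (φ.symm e)).snd
    with hheaddef
  set f : G.edgeSet ≃ Fin G.edgeFinset.card :=
    φ.symm.trans ((Equiv.ofBijective c hcbij).trans (finCongr hm.symm)) with hfdef
  have hfval : ∀ i : Fin m, ((f (φ i) : ℕ) : ℤ) + 1 = L i := by
    intro i
    rw [hfdef, hLdef]
    simp [finCongr]
  -- in-degree
  have hindeg : ∀ u : V, (univ.filter (fun i => (A i).snd = u)).card = d := by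
    intro u
    have hdisj : Disjoint (univ.filter (fun i => (A i).snd = u))
        (univ.filter (fun i => (A i).fst = u)) := by
      rw [Finset.disjoint_left]
      intro a ha hb
      simp only [mem_filter] at ha hb
      exact hAne a (hb.2.trans ha.2.symm)
    have hun : (univ.filter (fun i => (A i).snd = u)) ∪ (univ.filter (fun i => (A i).fst = u))
        = univ.filter (fun i => u ∈ (A i).edge) := by
      rw [← filter_or]
      apply filter_congr
      intro i _
      rw [hmem]
      constructor
      · rintro (h | h)
        · exact Or.inr h.symm
        · exact Or.inl h.symm
      · rintro (h | h)
        · exact Or.inr h.symm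
        · exact Or.inl h.symm
    have hdeg : (univ.filter (fun i => u ∈ (A i).edge)).card = G.degree u := by
      rw [← G.card_incidenceFinset_eq_degree u]
      apply card_bij (fun i _ => (A i).edge)
      · intro a ha
        simp only [mem_filter] at ha
        rw [mem_incidenceFinset]
        exact ⟨(A a).edge_mem, ha.2⟩
      · intro a _ b _ h
        exact hedge_inj _ _ h
      · intro e he
        rw [mem_incidenceFinset] at he
        have he1 : e ∈ G.edgeSet := he.1
        have hval : (A (φ.symm ⟨e, he1⟩)).edge = e := by
          have h2 := hφval (φ.symm ⟨e, he1⟩)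
          rw [Equiv.apply_symm_apply] at h2
          exact h2.symm
        refine ⟨φ.symm ⟨e, he1⟩, ?_, hval⟩
        simp only [mem_filter, mem_univ, true_and]
        rw [hval]
        exact he.2
    have hsum : (univ.filter (fun i => (A i).snd = u)).card
        + (univ.filter (fun i => (A i).fst = u)).card = 2 * d := by
      rw [← card_union_of_disjoint hdisj, hun, hdeg, hreg u]
    have heq : (univ.filter (fun i => (A i).snd = u)).card
        = (univ.filter (fun i => (A i).fst = u)).card := by
      apply card_bij (fun i _ => i + 1)
      · intro a ha
        simp only [mem_filter, mem_univ, true_and] at ha ⊢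
        rw [hchain a]
        exact ha
      · intro a _ b _ h
        exact add_right_cancel h
      · intro j hj
        simp only [mem_filter, mem_univ, true_and] at hj
        refine ⟨j - 1, ?_, sub_add_cancel j 1⟩
        simp only [mem_filter, mem_univ, true_and]
        have h2 : (j - 1) + 1 = j := sub_add_cancel j 1
        have h3 := hchain (j - 1)
        rw [h2] at h3
        rw [← h3]
        exact hj
    omega
  -- main sum computation
  have keycommon : ∀ (u : V) (i0 : Fin m), (A i0).snd = u →
      (∀ i, (A i).snd = u → i ≠ i0 → corr i = 0) →
      ((∑ e : G.edgeSet, if head e = u then ((f e : ℕ) : ℤ) + 1 else 0)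
        - ∑ e : G.edgeSet, if u ∈ (e : Sym2 V) ∧ head e ≠ u then ((f e : ℕ) : ℤ) + 1 else 0)
      = (d : ℤ) + corr i0 + (if x = u then 2 * (m : ℤ) else 0)
          - (if (A 0).snd = u then 2 * (m : ℤ) else 0) := by
    intro u i0 hi0 hvan
    have hstep1 : (∑ e : G.edgeSet, if head e = u then ((f e : ℕ) : ℤ) + 1 else 0)
        = ∑ i : Fin m, (if (if i = 0 then x else (A i).snd) = u then L i else 0) := by
      rw [← Equiv.sum_comp φ (fun e => if head e = u then ((f e : ℕ) : ℤ) + 1 else 0)]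
      apply Finset.sum_congr rfl
      intro i _
      have h2 : head (φ i) = if i = 0 then x else (A i).snd := by
        rw [hheaddef]
        dsimp only
        rw [Equiv.symm_apply_apply]
      rw [h2]
      by_cases h : (if i = 0 then x else (A i).snd) = u
      · rw [if_pos h, if_pos h, hfval]
      · rw [if_neg h, if_neg h]
    have hstep2 : (∑ e : G.edgeSet, if u ∈ (e : Sym2 V) ∧ head e ≠ u then ((f e : ℕ) : ℤ) + 1 else 0)
        = ∑ i : Fin m, (if (if i = 0 then (A 0).snd else (A i).fst) = u then L i else 0) := by
      rw [← Equiv.sum_comp φ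
        (fun e => if u ∈ (e : Sym2 V) ∧ head e ≠ u then ((f e : ℕ) : ℤ) + 1 else 0)]
      apply Finset.sum_congr rfl
      intro i _
      have h2 : head (φ i) = if i = 0 then x else (A i).snd := by
        rw [hheaddef]
        dsimp only
        rw [Equiv.symm_apply_apply]
      have hcond : (u ∈ ((φ i : G.edgeSet) : Sym2 V) ∧ head (φ i) ≠ u)
          ↔ ((if i = 0 then (A 0).snd else (A i).fst) = u) := by
        rw [hφval, h2, hmem]
        by_cases h0 : i = 0
        · subst h0
          simp only [if_pos rfl]
          constructor
          · rintro ⟨hmem', hne⟩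
            rcases hmem' with h | h
            · exact absurd h.symm hne
            · exact h.symm
          · intro h
            refine ⟨Or.inr h.symm, ?_⟩
            rw [← h]
            exact fun hh => hAne 0 hh
        · simp only [if_neg h0]
          constructor
          · rintro ⟨hmem', hne⟩
            rcases hmem' with h | h
            · exact h.symm
            · exact absurd h.symm hne
          · intro h
            refine ⟨Or.inl h.symm, fun hh => hAne i (h.trans hh.symm)⟩
      rw [if_congr hcond rfl rfl]
      by_cases h : (if i = 0 then (A 0).snd else (A i).fst) = u
      · rw [if_pos h, if_pos h, hfval]
      · rw [if_neg h, if_neg h]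
    have hswap : ∀ (w : V) (F : Fin m → V),
        ∑ i : Fin m, (if (if i = 0 then w else F i) = u then L i else 0)
        = (if w = u then L 0 else 0) - (if F 0 = u then L 0 else 0)
          + ∑ i : Fin m, (if F i = u then L i else 0) := by
      intro w F
      rw [Fintype.sum_eq_add_sum_compl 0
          (fun i => if (if i = 0 then w else F i) = u then L i else 0),
        Fintype.sum_eq_add_sum_compl 0 (fun i => if F i = u then L i else 0)]
      have hc : ∑ i ∈ ({0}ᶜ : Finset (Fin m)), (if (if i = 0 then w else F i) = u then L i else 0)
          = ∑ i ∈ ({0}ᶜ : Finset (Fin m)), (if F i = u then L i else 0) := by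
        apply Finset.sum_congr rfl
        intro i hi
        have hi0 : i ≠ 0 := by simpa using hi
        rw [if_neg hi0]
      rw [hc]
      simp only [eq_self_iff_true, if_true, ite_true]
      ring
    have htel : ∑ i : Fin m, (if (A i).fst = u then L i else 0)
        = ∑ i : Fin m, (if (A i).snd = u then L (i + 1) else 0) := by
      rw [← Equiv.sum_comp (Equiv.addRight (1 : Fin m))
        (fun i => if (A i).fst = u then L i else 0)]
      apply Finset.sum_congr rfl
      intro i _
      simp only [Equiv.coe_addRight]
      simp only [hchain i]
    have hsingle : ∑ i : Fin m, (if (A i).snd = u then corr i else 0) = corr i0 := by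
      have h2 : ∀ b ∈ (univ : Finset (Fin m)), b ≠ i0 →
          (if (A b).snd = u then corr b else 0) = 0 := by
        intro b _ hb
        by_cases h : (A b).snd = u
        · rw [if_pos h, hvan b h hb]
        · rw [if_neg h]
      rw [Finset.sum_eq_single_of_mem i0 (mem_univ i0) h2, if_pos hi0]
    have hcomb : ∑ i : Fin m, (if (A i).snd = u then L i else 0)
        - ∑ i : Fin m, (if (A i).snd = u then L (i + 1) else 0)
        = (d : ℤ) + corr i0 := by
      rw [← Finset.sum_sub_distrib]
      have h1 : ∀ i : Fin m,
          (if (A i).snd = u then L i else 0) - (if (A i).snd = u then L (i + 1) else 0)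
          = (if (A i).snd = u then (1 : ℤ) else 0) + (if (A i).snd = u then corr i else 0) := by
        intro i
        by_cases h : (A i).snd = u
        · simp only [if_pos h, hcorrdef]
          ring
        · simp only [if_neg h]
          ring
      rw [Finset.sum_congr rfl (fun i _ => h1 i), Finset.sum_add_distrib, hsingle,
        Finset.sum_boole, hindeg u]
    rw [hstep1, hstep2, hswap x (fun i => (A i).snd), hswap ((A 0).snd) (fun i => (A i).fst),
      htel, hL0]
    rw [← hxdef]
    have hcb := hcomb
    set S1 := ∑ i : Fin m, (if (A i).snd = u then L i else 0) with hS1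
    set S2 := ∑ i : Fin m, (if (A i).snd = u then L (i + 1) else 0) with hS2
    by_cases h1 : x = u <;> by_cases h2 : (A 0).snd = u
    · rw [if_pos h1, if_pos h2, if_pos h1, if_pos h2]
      omega
    · rw [if_pos h1, if_neg h2, if_pos h1, if_neg h2]
      omega
    · rw [if_neg h1, if_pos h2, if_neg h1, if_pos h2]
      omega
    · rw [if_neg h1, if_neg h2, if_neg h1, if_neg h2]
      omega
  -- classification keys
  have keyx : ((∑ e : G.edgeSet, if head e = x then ((f e : ℕ) : ℤ) + 1 else 0)
        - ∑ e : G.edgeSet, if x ∈ (e : Sym2 V) ∧ head e ≠ x then ((f e : ℕ) : ℤ) + 1 else 0)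
      = (d : ℤ) + k + m - ε := by
    have hxz : (A 0).snd ≠ x := fun h => hAne 0 h.symm
    have van : ∀ i, (A i).snd = x → i ≠ last → corr i = 0 := by
      intro i hi hil
      have hxi : x ∈ (A i).edge := (hmem i x).mpr (Or.inr hi.symm)
      have hiP : i ∉ P := by
        intro hiP
        have hxv : x ∈ M.verts := Subgraph.mem_verts_of_mem_edge ((hPmem i).mp hiP) hxi
        rcases hcase with hodd | heven
        · exact hodd hxv
        · obtain ⟨i1, _, huniq⟩ := hpM x hxv
          have hlastP : last ∈ P := (hPmem last).mpr heven
          have e1 := huniq i hiP hxi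
          have e2 := huniq last hlastP ((hmem last x).mpr (Or.inr hwrap.symm))
          exact hil (e1.trans e2.symm)
      have hi1P : (i + 1) ∉ P := by
        intro h1
        have hx1 : x ∈ (A (i + 1)).edge :=
          (hmem _ x).mpr (Or.inl (by rw [hchain i]; exact hi.symm))
        have hxv : x ∈ M.verts := Subgraph.mem_verts_of_mem_edge ((hPmem _).mp h1) hx1
        rcases hcase with hodd | heven
        · exact hodd hxv
        · obtain ⟨i1, _, huniq⟩ := hpM x hxv
          have hlastP : last ∈ P := (hPmem last).mpr heven
          have e1 := huniq (i + 1) h1 hx1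
          have e2 := huniq last hlastP ((hmem last x).mpr (Or.inr hwrap.symm))
          have he : i + 1 = last := e1.trans e2.symm
          apply hAne last
          rw [← he]
          rw [hchain i, hi]
          rw [he, hwrap]
      exact hcorr0 i hiP hi1P hil
    rw [keycommon x last hwrap van, hcorrLast, if_pos rfl, if_neg hxz]
    ring
  have keyhead : ∀ (u : V) (p : Fin m), u ≠ x → p ∈ P → u ∈ (A p).edge →
      (∀ j, j ∈ P → u ∈ (A j).edge → j = p) → (A p).snd = u →
      ((∑ e : G.edgeSet, if head e = u then ((f e : ℕ) : ℤ) + 1 else 0)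
        - ∑ e : G.edgeSet, if u ∈ (e : Sym2 V) ∧ head e ≠ u then ((f e : ℕ) : ℤ) + 1 else 0)
      = (d : ℤ) + p.val - m - (if (A 0).snd = u then 2 * (m : ℤ) else 0) := by
    intro u p hux hpP hpmem huniq hsnd
    have hplast : p ≠ last := fun h => hux (by rw [← hsnd, h, hwrap])
    have van : ∀ i, (A i).snd = u → i ≠ p → corr i = 0 := by
      intro i hi hip
      have hiP : i ∉ P := fun hiP => hip (huniq i hiP ((hmem i u).mpr (Or.inr hi.symm)))
      have hi1P : (i + 1) ∉ P := by
        intro h1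
        have hu1 : u ∈ (A (i + 1)).edge :=
          (hmem _ u).mpr (Or.inl (by rw [hchain i]; exact hi.symm))
        have he := huniq (i + 1) h1 hu1
        apply hAne p
        rw [← he, hchain i, hi, he, hsnd]
      have hil : i ≠ last := by
        intro h
        apply hux
        rw [← hi, h, hwrap]
      exact hcorr0 i hiP hi1P hil
    rw [keycommon u p hsnd van, hcorrP p hpP hplast,
      if_neg (fun h : x = u => hux h.symm)]
    ring
  have keytail : ∀ (u : V) (p : Fin m), u ≠ x → p ∈ P → u ∈ (A p).edge →
      (∀ j, j ∈ P → u ∈ (A j).edge → j = p) → (A p).fst = u →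
      ((∑ e : G.edgeSet, if head e = u then ((f e : ℕ) : ℤ) + 1 else 0)
        - ∑ e : G.edgeSet, if u ∈ (e : Sym2 V) ∧ head e ≠ u then ((f e : ℕ) : ℤ) + 1 else 0)
      = (d : ℤ) - 1 + m - p.val - (if (A 0).snd = u then 2 * (m : ℤ) else 0) := by
    intro u p hux hpP hpmem huniq hfst
    have hp0 : p ≠ 0 := fun h => h0P (h ▸ hpP)
    have hpval : 1 ≤ p.val := by
      rcases Nat.eq_zero_or_pos p.val with h | h
      · exact absurd (Fin.ext (by simp [h]) : p = 0) hp0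
      · exact h
    have hplt := p.isLt
    set q : Fin m := ⟨p.val - 1, by omega⟩ with hqdef
    have hq1 : q + 1 = p := by
      apply Fin.ext
      rw [fin_val_add_one hm2]
      have hqval : (q : Fin m).val = p.val - 1 := rfl
      split_ifs with h
      · omega
      · omega
    have hqsnd : (A q).snd = u := by
      have h := hchain q
      rw [hq1] at h
      rw [← h]
      exact hfst
    have van : ∀ i, (A i).snd = u → i ≠ q → corr i = 0 := by
      intro i hi hiq
      have hiP : i ∉ P := by
        intro hiP
        have he := huniq i hiP ((hmem i u).mpr (Or.inr hi.symm))
        apply hAne p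
        rw [hfst, ← he, hi]
      have hi1P : (i + 1) ∉ P := by
        intro h1
        have hu1 : u ∈ (A (i + 1)).edge :=
          (hmem _ u).mpr (Or.inl (by rw [hchain i]; exact hi.symm))
        have he := huniq (i + 1) h1 hu1
        apply hiq
        have hqi : q + 1 = i + 1 := by rw [hq1, ← he]
        exact (add_right_cancel hqi).symm
      have hil : i ≠ last := by
        intro h
        apply hux
        rw [← hi, h, hwrap]
      exact hcorr0 i hiP hi1P hil
    have hcq : corr q = (m : ℤ) - p.val - 1 := hcorrPrev p hpP
    rw [keycommon u q hqsnd van, hcq, if_neg (fun h : x = u => hux h.symm)]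
    ring
  -- final assembly
  refine ⟨head, ?_, f, ?_⟩
  · intro e
    rw [hheaddef]
    dsimp only
    split_ifs with h
    · have : (e : Sym2 V) = (A (φ.symm e)).edge := by
        rw [← hφval (φ.symm e), Equiv.apply_symm_apply]
      rw [this, h]
      rw [hmem]
      left
      rw [hxdef]
    · have : (e : Sym2 V) = (A (φ.symm e)).edge := by
        rw [← hφval (φ.symm e), Equiv.apply_symm_apply]
      rw [this, hmem]
      right
      rfl
  · intro u v huv
    have hε01 : ε ≤ 1 := by rw [hεdef]; split_ifs <;> omega
    have hεk : ε ≤ k := by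
      rw [hεdef]
      split_ifs with h
      · rw [hkdef]; exact card_pos.mpr ⟨last, h⟩
      · omega
    have hclassify : ∀ w : V, w ≠ x → ∃ p : Fin m, p ∈ P ∧ w ∈ (A p).edge ∧
        (∀ j, j ∈ P → w ∈ (A j).edge → j = p) ∧ ((A p).snd = w ∨ (A p).fst = w) := by
      intro w hw
      have hwv : w ∈ M.verts := by
        by_contra h
        exact hw (hcov w h)
      obtain ⟨p, ⟨hp1, hp2⟩, hp3⟩ := hpM w hwv
      refine ⟨p, hp1, hp2, hp3, ?_⟩
      rcases (hmem p w).mp hp2 with h | h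
      · exact Or.inr h.symm
      · exact Or.inl h.symm
    have hbound : ∀ p : Fin m, p ∈ P → 1 ≤ p.val ∧ p.val ≤ m - 1 := by
      intro p hp
      have h1 := p.isLt
      have hp0 : p ≠ 0 := fun h => h0P (h ▸ hp)
      have : p.val ≠ 0 := fun h => hp0 (Fin.ext (by simp [h]))
      omega
    have hheadbound : ∀ (w : V) (p : Fin m), w ≠ x → (A p).snd = w → p.val ≤ m - 2 := by
      intro w p hw hsnd
      have h1 := p.isLt
      have hplast : p ≠ last := fun h => hw (by rw [← hsnd, h, hwrap])
      have : p.val ≠ m - 1 := fun h => hplast (Fin.ext h)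
      omega
    have hmm := hm2
    have hkmm := hkm
    by_cases hu : u = x <;> by_cases hv : v = x
    · exact absurd (hu.trans hv.symm) huv
    · subst hu
      obtain ⟨p, hp1, hp2, hp3, hp4⟩ := hclassify v hv
      rw [keyx]
      have hb := hbound p hp1
      rcases hp4 with hh | ht
      · rw [keyhead v p hv hp1 hp2 hp3 hh]
        have hb2 := hheadbound v p hv hh
        by_cases hz : (A 0).snd = v
        · rw [if_pos hz]; omega
        · rw [if_neg hz]; omega
      · rw [keytail v p hv hp1 hp2 hp3 ht]
        by_cases hz : (A 0).snd = v
        · rw [if_pos hz]; omega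
        · rw [if_neg hz]; omega
    · subst hv
      obtain ⟨p, hp1, hp2, hp3, hp4⟩ := hclassify u hu
      rw [keyx]
      have hb := hbound p hp1
      rcases hp4 with hh | ht
      · rw [keyhead u p hu hp1 hp2 hp3 hh]
        have hb2 := hheadbound u p hu hh
        by_cases hz : (A 0).snd = u
        · rw [if_pos hz]; omega
        · rw [if_neg hz]; omega
      · rw [keytail u p hu hp1 hp2 hp3 ht]
        by_cases hz : (A 0).snd = u
        · rw [if_pos hz]; omega
        · rw [if_neg hz]; omega
    · obtain ⟨p, hp1, hp2, hp3, hp4⟩ := hclassify u hu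
      obtain ⟨r, hr1, hr2, hr3, hr4⟩ := hclassify v hv
      have hbp := hbound p hp1
      have hbr := hbound r hr1
      have hzz : ¬((A 0).snd = u ∧ (A 0).snd = v) := fun h => huv (h.1.symm.trans h.2)
      rcases hp4 with hh1 | ht1 <;> rcases hr4 with hh2 | ht2
      · rw [keyhead u p hu hp1 hp2 hp3 hh1, keyhead v r hv hr1 hr2 hr3 hh2]
        have hpr : p.val ≠ r.val := by
          intro h
          apply huv
          rw [← hh1, ← hh2, show p = r from Fin.ext h]
        have hb2 := hheadbound u p hu hh1
        have hb3 := hheadbound v r hv hh2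
        by_cases hz1 : (A 0).snd = u <;> by_cases hz2 : (A 0).snd = v
        · exact absurd ⟨hz1, hz2⟩ hzz
        · rw [if_pos hz1, if_neg hz2]; omega
        · rw [if_neg hz1, if_pos hz2]; omega
        · rw [if_neg hz1, if_neg hz2]; omega
      · rw [keyhead u p hu hp1 hp2 hp3 hh1, keytail v r hv hr1 hr2 hr3 ht2]
        have hb2 := hheadbound u p hu hh1
        by_cases hz1 : (A 0).snd = u <;> by_cases hz2 : (A 0).snd = v
        · exact absurd ⟨hz1, hz2⟩ hzz
        · rw [if_pos hz1, if_neg hz2]; omega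
        · rw [if_neg hz1, if_pos hz2]; omega
        · rw [if_neg hz1, if_neg hz2]; omega
      · rw [keytail u p hu hp1 hp2 hp3 ht1, keyhead v r hv hr1 hr2 hr3 hh2]
        have hb3 := hheadbound v r hv hh2
        by_cases hz1 : (A 0).snd = u <;> by_cases hz2 : (A 0).snd = v
        · exact absurd ⟨hz1, hz2⟩ hzz
        · rw [if_pos hz1, if_neg hz2]; omega
        · rw [if_neg hz1, if_pos hz2]; omega
        · rw [if_neg hz1, if_neg hz2]; omega
      · rw [keytail u p hu hp1 hp2 hp3 ht1, keytail v r hv hr1 hr2 hr3 ht2]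
        have hpr : p.val ≠ r.val := by
          intro h
          apply huv
          rw [← ht1, ← ht2, show p = r from Fin.ext h]
        by_cases hz1 : (A 0).snd = u <;> by_cases hz2 : (A 0).snd = v
        · exact absurd ⟨hz1, hz2⟩ hzz
        · rw [if_pos hz1, if_neg hz2]; omega
        · rw [if_neg hz1, if_pos hz2]; omega
        · rw [if_neg hz1, if_neg hz2]; omega

end AntimagicAux2

/-- Every connected `2d`-regular graph (`d ≥ 1`) having a matching covering all but at most
one vertex admits an antimagic orientation. -/


theorem connected_even_regular_with_near_perfect_matching_has_antimagic_orientation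
    {V : Type*} [Fintype V] [DecidableEq V] (G : SimpleGraph V) [DecidableRel G.Adj]
    (d : ℕ) (hd : 1 ≤ d) (hreg : G.IsRegularOfDegree (2 * d)) (hconn : G.Connected)
    (M : G.Subgraph) (hM : M.IsMatching) (hcover : (M.vertsᶜ : Set V).Subsingleton) :
    G.HasAntimagicOrientation := by
  classical
  obtain ⟨v0⟩ := hconn.nonempty
  have heven : ∀ v, Even (G.degree v) := fun v => by rw [hreg v]; exact even_two_mul d
  set m := G.edgeFinset.card with hmdef
  have hn : 2 * d < Fintype.card V := by
    rw [← hreg v0]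
    exact G.degree_lt_card_verts v0
  have hsum := G.sum_degrees_eq_twice_card_edges
  have hsum2 : ∑ v : V, G.degree v = Fintype.card V * (2 * d) := by
    rw [Finset.sum_congr rfl (fun v _ => hreg v)]
    simp [Finset.sum_const, Finset.card_univ, smul_eq_mul]
  have hkey : Fintype.card V * (2 * d) = 2 * m := by rw [← hsum2, hsum]
  have hm6 : 3 * 2 ≤ Fintype.card V * (2 * d) := Nat.mul_le_mul (by omega) (by omega)
  have hm2 : 1 < m := by omega
  haveI : NeZero m := ⟨by omega⟩
  obtain ⟨A0, hchain0, hbij0⟩ := exists_tour G hconn heven hmdef.symm hm2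
  rcases hcover.eq_empty_or_singleton with hemp | ⟨u0, hu0⟩
  · -- perfect matching case
    have hallcov : ∀ v : V, v ∈ M.verts := by
      intro v
      by_contra h
      have h2 : v ∈ (M.vertsᶜ : Set V) := h
      rw [hemp] at h2
      exact h2
    obtain ⟨w, hw, _⟩ := hM (hallcov v0)
    have hedgeM : s(v0, w) ∈ M.edgeSet := SimpleGraph.Subgraph.mem_edgeSet.mpr hw
    have hedgeG : s(v0, w) ∈ G.edgeSet := M.edgeSet_subset hedgeM
    obtain ⟨q, hq⟩ := hbij0.2 ⟨s(v0, w), hedgeG⟩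
    have hqedge : (A0 q).edge = s(v0, w) := congrArg Subtype.val hq
    set A : Fin m → G.Dart := fun i => A0 (i + (q + 1)) with hA
    have hchain : ∀ i, (A (i + 1)).fst = (A i).snd := by
      intro i
      simp only [hA]
      rw [add_right_comm]
      exact hchain0 (i + (q + 1))
    have hbij : Function.Bijective (fun i => (⟨(A i).edge, (A i).edge_mem⟩ : G.edgeSet)) := by
      have heq : (fun i => (⟨(A i).edge, (A i).edge_mem⟩ : G.edgeSet))
          = (fun i => (⟨(A0 i).edge, (A0 i).edge_mem⟩ : G.edgeSet)) ∘ (Equiv.addRight (q + 1)) := rfl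
      rw [heq]
      exact hbij0.comp (Equiv.addRight (q + 1)).bijective
    have hlast : A ⟨m - 1, by omega⟩ = A0 q := by
      simp only [hA]
      congr 1
      calc (⟨m - 1, by omega⟩ : Fin m) + (q + 1)
          = ((⟨m - 1, by omega⟩ : Fin m) + 1) + q := by rw [add_assoc, add_comm q 1]
        _ = 0 + q := by rw [fin_last_add_one hm2]
        _ = q := zero_add q
    apply core_antimagic G d hreg M hM hmdef.symm hm2 A hchain hbij
    · intro v hv
      exact absurd (hallcov v) hv
    · right
      rw [hlast, hqedge]
      exact hedgeM
  · -- near-perfect case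
    have hu0n : u0 ∉ M.verts := by
      have h2 : u0 ∈ (M.vertsᶜ : Set V) := by rw [hu0]; exact Set.mem_singleton u0
      exact h2
    have hdeg : 0 < G.degree u0 := by rw [hreg u0]; omega
    obtain ⟨w, hw⟩ := (G.degree_pos_iff_exists_adj u0).mp hdeg
    have hedgeG : s(u0, w) ∈ G.edgeSet := hw
    obtain ⟨q, hq⟩ := hbij0.2 ⟨s(u0, w), hedgeG⟩
    have hqedge : (A0 q).edge = s(u0, w) := congrArg Subtype.val hq
    have hu0mem : u0 ∈ (A0 q).edge := by rw [hqedge]; exact Sym2.mem_mk_left _ _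
    have hfs : u0 = (A0 q).fst ∨ u0 = (A0 q).snd := Sym2.mem_iff.mp hu0mem
    obtain ⟨t, ht⟩ : ∃ t : Fin m, (A0 (0 + t)).fst = u0 := by
      rcases hfs with h | h
      · exact ⟨q, by rw [zero_add]; exact h.symm⟩
      · refine ⟨q + 1, ?_⟩
        rw [zero_add, hchain0 q]
        exact h.symm
    set A : Fin m → G.Dart := fun i => A0 (i + t) with hA
    have hchain : ∀ i, (A (i + 1)).fst = (A i).snd := by
      intro i
      simp only [hA]
      rw [add_right_comm]
      exact hchain0 (i + t)
    have hbij : Function.Bijective (fun i => (⟨(A i).edge, (A i).edge_mem⟩ : G.edgeSet)) := by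
      have heq : (fun i => (⟨(A i).edge, (A i).edge_mem⟩ : G.edgeSet))
          = (fun i => (⟨(A0 i).edge, (A0 i).edge_mem⟩ : G.edgeSet)) ∘ (Equiv.addRight t) := rfl
      rw [heq]
      exact hbij0.comp (Equiv.addRight t).bijective
    have hA0 : (A 0).fst = u0 := ht
    apply core_antimagic G d hreg M hM hmdef.symm hm2 A hchain hbij
    · intro v hv
      have h2 : v ∈ (M.vertsᶜ : Set V) := hv
      rw [hu0] at h2
      rw [h2, hA0]
    · left
      rw [hA0]
      exact hu0n
end

section
/- Let d ≥ 2 be an integer, let G be a finite connected 2d-regular simple graph on n vertices with m edges, and let W be an Eulerian circuit of G, viewed as a cyclic sequence of m vertex occurrences (position i carries the i-th vertex visited by W, indices taken modulo m, and each vertex of G occurs exactly d times). Then there exists a set S of positions of size n such that the map sending each position in S to the vertex occurring at that position is a bijection from S onto the vertex set of G, and there exist four cyclically consecutive positions i, i+1, i+2, i+3 (mod m) with i ∈ S, i+1 ∈ S, i+3 ∈ S, and i+2 ∉ S. -/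
/-!
Since `G` has minimum degree `2d ≥ 4`, it has more than three vertices, so the circuit is not
3-periodic: some window `a b c e` of four consecutive occurrences has `a ≠ e`. Its vertices
`a, b, e` are pairwise distinct (`b ≠ e` because the circuit does not reuse the edge `bc`), and
`c`, having degree at least `3`, is entered or left along an edge other than `bc` and `ce`, hence
occurs at a second position. So the occurrences other than the one of `c` in the window still
cover every vertex, and `{i, i + 1, i + 3}` extends, within them, to a set of real occurrences.
-/

lemma apply_mod_of_forall_apply_add_eq {α : Type*} {f : ℕ → α} {n k : ℕ}
    (hf : ∀ i, i + k < n → f (i + k) = f i) {j : ℕ} (hj : j < n) : f (j % k) = f j := by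
  obtain rfl | hk := k.eq_zero_or_pos
  · rw [Nat.mod_zero]
  induction j using Nat.strong_induction_on with
  | _ j ih =>
    rcases lt_or_ge j k with hjk | hkj
    · rw [Nat.mod_eq_of_lt hjk]
    · rw [Nat.mod_eq_sub_mod hkj, ih (j - k) (by omega) (by omega), ← hf (j - k) (by omega),
        Nat.sub_add_cancel hkj]

lemma exists_apply_add_ne_of_lt_card {α : Type*} [Fintype α] {f : ℕ → α} {n k : ℕ}
    (hf : Set.SurjOn f (Set.Iio n) Set.univ) (hk₀ : 0 < k) (hk : k < Fintype.card α) :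
    ∃ i, i + k < n ∧ f (i + k) ≠ f i := by
  by_contra! hper
  have hsurj : Function.Surjective fun j : Fin k => f j := fun x => by
    obtain ⟨j, hj, rfl⟩ := hf (Set.mem_univ x)
    exact ⟨⟨j % k, Nat.mod_lt j hk₀⟩, apply_mod_of_forall_apply_add_eq hper hj⟩
  have := Fintype.card_le_of_surjective _ hsurj
  rw [Fintype.card_fin] at this
  omega

lemma Set.InjOn.exists_finset_superset_bijOn {α β : Type*} {f : α → β} {s : Set α}
    {t : Finset α} {u : Set β} (h : Set.InjOn f s) (hst : s ⊆ t) (hsurj : Set.SurjOn f t u)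
    (hsu : f '' s ⊆ u) : ∃ S : Finset α, s ⊆ S ∧ S ⊆ t ∧ Set.BijOn f S u := by
  obtain ⟨S, hsS, hSt, hbij⟩ := h.bijOn_image.exists_extend_of_subset hst hsu hsurj
  have hfin : S.Finite := t.finite_toSet.subset hSt
  exact ⟨hfin.toFinset, by simpa using hsS, by simpa using hSt, by simpa using hbij⟩

namespace SimpleGraph.Walk

variable {V : Type*} {G : SimpleGraph V}

lemma IsTrail.getVert_add_two_ne {u w : V} {p : G.Walk u w} (hp : p.IsTrail) {k : ℕ}
    (hk : k + 2 ≤ p.length) : p.getVert (k + 2) ≠ p.getVert k := by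
  intro h
  have hk' : k + 1 < p.edges.length := by rw [length_edges]; omega
  have hedge : p.edges[k] = p.edges[k + 1] := by
    rw [getElem_edges, getElem_edges, h, Sym2.eq_swap]
  have := (hp.edges_nodup.getElem_inj_iff).mp hedge
  omega

variable {v : V} {p : G.Walk v v}

lemma getVert_mod_length {j : ℕ} (hj : j ≤ p.length) :
    p.getVert (j % p.length) = p.getVert j := by
  rcases hj.lt_or_eq with hj | rfl
  · rw [Nat.mod_eq_of_lt hj]
  · rw [Nat.mod_self, getVert_zero, getVert_length]

lemma exists_getVert_mod_of_mem_edges {x y : V} (h : s(x, y) ∈ p.edges) :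
    ∃ k < p.length, s(p.getVert k, p.getVert ((k + 1) % p.length)) = s(x, y) := by
  obtain ⟨k, hk, hxy⟩ := (mk_mem_edges_iff_exists p).mp h
  exact ⟨k, hk, by rwa [getVert_mod_length hk]⟩

lemma IsEulerian.surjOn_getVert [DecidableEq V] (hp : p.IsEulerian) (hG : ∀ x, ∃ y, G.Adj x y) :
    Set.SurjOn p.getVert (Set.Iio p.length) Set.univ := fun x _ => by
  obtain ⟨y, hxy⟩ := hG x
  obtain ⟨k, hk, hk'⟩ := exists_getVert_mod_of_mem_edges (hp.mem_edges_iff.mpr hxy)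
  rcases Sym2.eq_iff.mp hk' with ⟨hx, -⟩ | ⟨-, hx⟩
  · exact ⟨k, hk, hx⟩
  · exact ⟨_, Nat.mod_lt _ (by omega), hx⟩

lemma IsEulerian.exists_ne_getVert_eq [DecidableEq V] [G.LocallyFinite] (hp : p.IsEulerian)
    {k : ℕ} (hk : k + 2 < p.length) (hdeg : 2 < G.degree (p.getVert (k + 1))) :
    ∃ j < p.length, j ≠ k + 1 ∧ p.getVert j = p.getVert (k + 1) := by
  obtain ⟨y, hadj, hy'⟩ := Finset.exists_mem_notMem_of_card_lt_card
    (s := {p.getVert k, p.getVert (k + 2)}) (t := G.neighborFinset (p.getVert (k + 1)))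
    ((Finset.card_le_two).trans_lt (by rwa [card_neighborFinset_eq_degree]))
  rw [mem_neighborFinset] at hadj
  simp only [Finset.mem_insert, Finset.mem_singleton, not_or] at hy'
  obtain ⟨l, hl, hl'⟩ := exists_getVert_mod_of_mem_edges (hp.mem_edges_iff.mpr hadj)
  rcases Sym2.eq_iff.mp hl' with ⟨hx, hy⟩ | ⟨hy, hx⟩
  · refine ⟨l, hl, ?_, hx⟩
    rintro rfl
    rw [Nat.mod_eq_of_lt (show k + 1 + 1 < p.length by omega)] at hy
    exact hy'.2 hy.symm
  · refine ⟨_, Nat.mod_lt _ (by omega), ?_, hx⟩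
    intro hmod
    obtain rfl : l = k := by
      rcases (show l + 1 ≤ p.length from hl).lt_or_eq with hl₁ | hl₁
      · rw [Nat.mod_eq_of_lt hl₁] at hmod
        omega
      · rw [hl₁, Nat.mod_self] at hmod
        omega
    exact hy'.1 hy.symm

lemma IsEulerian.surjOn_getVert_sdiff [DecidableEq V] [G.LocallyFinite] (hp : p.IsEulerian)
    (hdeg : ∀ x, 2 < G.degree x) {k : ℕ} (hk : k + 2 < p.length) :
    Set.SurjOn p.getVert (Set.Iio p.length \ {k + 1}) Set.univ := by
  rintro x -
  obtain ⟨j, hj, rfl⟩ := hp.surjOn_getVert (fun x => (G.degree_pos_iff_exists_adj x).mp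
    (zero_lt_two.trans (hdeg x))) (Set.mem_univ x)
  by_cases hjk : j = k + 1
  · subst hjk
    obtain ⟨j', hj', hne, heq⟩ := hp.exists_ne_getVert_eq hk (hdeg _)
    exact ⟨j', ⟨hj', hne⟩, heq⟩
  · exact ⟨j, ⟨hj, hjk⟩, rfl⟩

end SimpleGraph.Walk

theorem euler_tour_real_vertex_selection_general
    {V : Type*} [Fintype V] [DecidableEq V] (G : SimpleGraph V) [DecidableRel G.Adj]
    (d : ℕ) (hd : 2 ≤ d) (hreg : G.IsRegularOfDegree (2 * d))
    (v : V) (p : G.Walk v v) (hp : p.IsEulerian) :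
    ∃ S : Finset ℕ,
      (∀ i ∈ S, i < p.length) ∧
      S.card = Fintype.card V ∧
      Set.BijOn (fun i => p.getVert i) ↑S (Set.univ : Set V) ∧
      ∃ i < p.length, i ∈ S ∧ (i + 1) % p.length ∈ S ∧
        (i + 3) % p.length ∈ S ∧ (i + 2) % p.length ∉ S := by
  have hdeg : ∀ x, 2 < G.degree x := fun x => by rw [hreg x]; omega
  have hsurj := hp.surjOn_getVert fun x =>
    (G.degree_pos_iff_exists_adj x).mp (zero_lt_two.trans (hdeg x))
  have hcard : 3 < Fintype.card V := by
    have := G.degree_lt_card_verts v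
    rw [hreg v] at this
    omega
  obtain ⟨i, hi, hae⟩ := exists_apply_add_ne_of_lt_card hsurj three_pos hcard
  have hab : p.getVert i ≠ p.getVert (i + 1) := (p.adj_getVert_succ (by omega)).ne
  have hbe : p.getVert (i + 1 + 2) ≠ p.getVert (i + 1) :=
    hp.isTrail.getVert_add_two_ne (by omega)
  have hinj : Set.InjOn p.getVert {i, i + 1, i + 3} := by
    simp only [Set.InjOn, Set.mem_insert_iff, Set.mem_singleton_iff]
    grind
  obtain ⟨S, hiS, hS, hbij⟩ := hinj.exists_finset_superset_bijOn
    (t := (Finset.range p.length).erase (i + 2)) (by grind)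
    (by simpa using hp.surjOn_getVert_sdiff hdeg (k := i + 1) (by omega)) (Set.subset_univ _)
  refine ⟨S, fun j hj => by simpa using (Finset.mem_erase.mp (hS hj)).2,
    by simpa using hbij.ncard_eq, hbij, i, by omega, ?_⟩
  simp only [Nat.mod_eq_of_lt (show i + 1 < p.length by omega),
    Nat.mod_eq_of_lt (show i + 2 < p.length by omega), Nat.mod_eq_of_lt hi]
  exact ⟨hiS (by simp), hiS (by simp), hiS (by simp),
    fun h => (Finset.mem_erase.mp (hS h)).1 rfl⟩

/-- Given an Eulerian circuit `p` (a closed Eulerian walk) of a connected `2d`-regular graph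
(`d ≥ 2`) on vertex set `V`, viewed as a cyclic sequence of `p.length` vertex occurrences
(position `i` carries the vertex `p.getVert i`), there is a set `S` of positions, of size
`Fintype.card V`, mapping bijectively onto `V`, together with four cyclically consecutive
positions `i, i+1, i+2, i+3 (mod p.length)` such that `i, i+1, i+3 ∈ S` and `i+2 ∉ S`. -/
theorem euler_tour_real_vertex_selection
    {V : Type*} [Fintype V] [DecidableEq V] (G : SimpleGraph V) [DecidableRel G.Adj]
    (d : ℕ) (hd : 2 ≤ d) (hreg : G.IsRegularOfDegree (2 * d)) (hconn : G.Connected)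
    (v : V) (p : G.Walk v v) (hp : p.IsEulerian) :
    ∃ S : Finset ℕ,
      (∀ i ∈ S, i < p.length) ∧
      S.card = Fintype.card V ∧
      Set.BijOn (fun i => p.getVert i) ↑S (Set.univ : Set V) ∧
      ∃ i < p.length, i ∈ S ∧ (i + 1) % p.length ∈ S ∧
        (i + 3) % p.length ∈ S ∧ (i + 2) % p.length ∉ S :=
  euler_tour_real_vertex_selection_general G d hd hreg v p hp
end
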